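/- arXiv:1804.01868 — 6 statements merged into one kernel-verified Lean document; each statement's English description precedes it below -/
import Mathlib

section
/- For all positive integers n and k, the poly-Bernoulli number B_{n,k} defined by the basic formula equals the inclusion-exclusion formula: ∑_{m=0}^{min(n,k)} (m!)² S(n+1,m+1) S(k+1,m+1) = ∑_{m=0}^{n} (-1)^{n+m} m! S(n,m) (m+1)^k, where S(a,b) denotes the Stirling number of the second kind. -/
/-- Stirling numbers of the second kind: `stirling n r` is the number of
partitions of an `n`-element set into `r` non-empty blocks. -/
def stirling : ℕ → ℕ → ℕ
  | 0, 0 => 1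
  | 0, _ + 1 => 0
  | _ + 1, 0 => 0
  | n + 1, r + 1 => (r + 1) * stirling n (r + 1) + stirling n r

lemma stirling_eq_zero_of_lt : ∀ n m : ℕ, n < m → stirling n m = 0
  | 0, _ + 1, _ => rfl
  | n + 1, m + 1, h => by
    have h1 : n < m + 1 := by omega
    have h2 : n < m := by omega
    simp [stirling, stirling_eq_zero_of_lt n (m+1) h1, stirling_eq_zero_of_lt n m h2]

lemma key_choose (j m : ℕ) :
    ((j:ℤ)+1) * (j+1).choose m - j * j.choose m
      = (m+1) * j.choose m + m * j.choose (m-1) := by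
  cases m with
  | zero => simp
  | succ m' =>
    have h := Nat.add_one_mul_choose_eq j m'
    have h' : ((j:ℤ)+1) * (j.choose m') = ((j+1).choose (m'+1)) * (m'+1) := by
      exact_mod_cast congrArg (Nat.cast : ℕ → ℤ) h
    rw [Nat.choose_succ_succ] at h' ⊢
    push_cast at h' ⊢
    linear_combination h'

lemma lemA : ∀ n m : ℕ,
    (∑ j ∈ Finset.range (n+1),
      (-1:ℤ)^(n+j) * (Nat.factorial j) * stirling n j * (j.choose m))
      = (Nat.factorial m) * stirling (n+1) (m+1) := by
  intro n
  induction n with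
  | zero =>
    intro m
    cases m <;> simp [stirling, Nat.factorial]
  | succ n ih =>
    intro m
    rw [Finset.sum_range_succ']
    have hf0 : stirling (n+1) 0 = 0 := rfl
    set G : ℕ → ℤ := fun j =>
      (-1:ℤ)^(n+j) * (Nat.factorial j) * ((j:ℤ) * stirling n j) * (j.choose m) with hG
    have hsplit : ∀ i ∈ Finset.range (n+1),
        (-1:ℤ)^(n+1+(i+1)) * (Nat.factorial (i+1)) * stirling (n+1) (i+1) * ((i+1).choose m)
        = (-1:ℤ)^(n+i) * (Nat.factorial i) * stirling n i * (((i:ℤ)+1) * ((i+1).choose m))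
          - G (i+1) := by
      intro i _
      have hs : stirling (n+1) (i+1) = (i+1) * stirling n (i+1) + stirling n i := rfl
      have hp : (-1:ℤ)^(n+1+(i+1)) = (-1:ℤ)^(n+i) := by
        rw [show n+1+(i+1) = (n+i)+2 by omega, pow_add]; ring
      have hp2 : (-1:ℤ)^(n+(i+1)) = -(-1:ℤ)^(n+i) := by
        rw [show n+(i+1) = (n+i)+1 by omega, pow_add]; ring
      have hfac : (Nat.factorial (i+1) : ℤ) = (i+1) * Nat.factorial i := by
        push_cast [Nat.factorial_succ]; ring
      rw [hs, hp, hG]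
      simp only []
      rw [hp2, hfac]
      push_cast
      ring
    rw [Finset.sum_congr rfl hsplit, Finset.sum_sub_distrib]
    have hGsum : ∑ i ∈ Finset.range (n+1), G (i+1) = ∑ j ∈ Finset.range (n+1), G j := by
      have h1 : ∑ j ∈ Finset.range (n+2), G j
          = ∑ i ∈ Finset.range (n+1), G (i+1) + G 0 := Finset.sum_range_succ' G (n+1)
      have h2 : ∑ j ∈ Finset.range (n+2), G j
          = ∑ j ∈ Finset.range (n+1), G j + G (n+1) := Finset.sum_range_succ G (n+1)
      have hG0 : G 0 = 0 := by simp [hG]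
      have hGn : G (n+1) = 0 := by
        simp [hG, stirling_eq_zero_of_lt n (n+1) (by omega)]
      rw [hG0] at h1; rw [hGn] at h2; linarith
    rw [hGsum, hf0]
    simp only [Nat.cast_zero, mul_zero, zero_mul, add_zero]
    rw [← Finset.sum_sub_distrib]
    have hterm : ∀ j ∈ Finset.range (n+1),
        (-1:ℤ)^(n+j) * (Nat.factorial j) * stirling n j * (((j:ℤ)+1) * ((j+1).choose m)) - G j
        = (((m:ℤ)+1) * ((-1:ℤ)^(n+j) * (Nat.factorial j) * stirling n j * (j.choose m)))
          + ((m:ℤ) * ((-1:ℤ)^(n+j) * (Nat.factorial j) * stirling n j * (j.choose (m-1)))) := by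
      intro j _
      have hk := key_choose j m
      simp only [hG]
      linear_combination ((-1:ℤ)^(n+j) * (Nat.factorial j : ℤ) * (stirling n j : ℤ)) * hk
    rw [Finset.sum_congr rfl hterm, Finset.sum_add_distrib, ← Finset.mul_sum, ← Finset.mul_sum,
      ih m, ih (m-1)]
    have hs : stirling (n+1+1) (m+1) = (m+1) * stirling (n+1) (m+1) + stirling (n+1) m := rfl
    rw [hs]
    cases m with
    | zero => simp [hf0]
    | succ m' =>
      have hfac : (Nat.factorial (m'+1) : ℤ) = (m'+1) * Nat.factorial m' := by
        push_cast [Nat.factorial_succ]; ring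
      simp only [Nat.add_sub_cancel]
      rw [hfac]
      push_cast
      ring

lemma lemB (j : ℕ) : ∀ k : ℕ, ((j:ℤ)+1)^k
    = ∑ m ∈ Finset.range (j+1), (j.choose m : ℤ) * (Nat.factorial m) * stirling (k+1) (m+1) := by
  intro k
  induction k with
  | zero =>
    rw [Finset.sum_eq_single 0]
    · simp [stirling]
    · intro m _ hm
      obtain ⟨m', rfl⟩ : ∃ m', m = m' + 1 := ⟨m - 1, by omega⟩
      have : stirling 1 (m'+2) = 0 := stirling_eq_zero_of_lt 1 (m'+2) (by omega)
      simp [this]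
    · intro h; simp at h
  | succ k ih =>
    have hpow : ((j:ℤ)+1)^(k+1) = ((j:ℤ)+1) * ((j:ℤ)+1)^k := by ring
    rw [hpow, ih, Finset.mul_sum]
    have hsplit : ∀ m ∈ Finset.range (j+1),
        (j.choose m : ℤ) * (Nat.factorial m) * stirling (k+1+1) (m+1)
        = (j.choose m : ℤ) * (Nat.factorial m) * (((m:ℤ)+1) * stirling (k+1) (m+1))
          + (j.choose m : ℤ) * (Nat.factorial m) * stirling (k+1) m := by
      intro m _
      have hs : stirling (k+1+1) (m+1) = (m+1) * stirling (k+1) (m+1) + stirling (k+1) m := rfl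
      rw [hs]; push_cast; ring
    rw [Finset.sum_congr rfl hsplit, Finset.sum_add_distrib]
    have h2 : ∑ m ∈ Finset.range (j+1), (j.choose m : ℤ) * (Nat.factorial m) * stirling (k+1) m
        = ∑ m ∈ Finset.range (j+1),
            (j.choose (m+1) : ℤ) * (Nat.factorial (m+1)) * stirling (k+1) (m+1) := by
      rw [Finset.sum_range_succ' (fun m => (j.choose m : ℤ) * (Nat.factorial m) * stirling (k+1) m) j,
        Finset.sum_range_succ (fun m => (j.choose (m+1) : ℤ) * (Nat.factorial (m+1)) * stirling (k+1) (m+1)) j]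
      have hz : stirling (k+1) 0 = 0 := rfl
      have hc : j.choose (j+1) = 0 := Nat.choose_succ_self j
      simp [hz, hc]
    rw [h2, ← Finset.sum_add_distrib]
    refine Finset.sum_congr rfl fun m _ => ?_
    have h := Nat.add_one_mul_choose_eq j m
    have h' : ((j:ℤ)+1) * (j.choose m) = ((j+1).choose (m+1)) * (m+1) := by
      exact_mod_cast congrArg (Nat.cast : ℕ → ℤ) h
    rw [Nat.choose_succ_succ] at h'
    have hfac : (Nat.factorial (m+1) : ℤ) = (m+1) * Nat.factorial m := by
      push_cast [Nat.factorial_succ]; ring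
    rw [hfac]
    push_cast at h' ⊢
    linear_combination (Nat.factorial m : ℤ) * (stirling (k+1) (m+1) : ℤ) * h'

theorem polyBernoulli_basic_eq_inclusion_exclusion (n k : ℕ) (hn : 0 < n) (hk : 0 < k) :
    (∑ m ∈ Finset.range (min n k + 1),
        ((Nat.factorial m) ^ 2 * stirling (n + 1) (m + 1) * stirling (k + 1) (m + 1) : ℤ)) =
      ∑ m ∈ Finset.range (n + 1),
        (-1 : ℤ) ^ (n + m) * (Nat.factorial m) * stirling n m * (m + 1) ^ k := by
  have hrhs : ∀ j ∈ Finset.range (n+1),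
      (-1 : ℤ) ^ (n + j) * (Nat.factorial j) * stirling n j * ((j:ℤ) + 1) ^ k
      = ∑ m ∈ Finset.range (n+1),
          ((-1 : ℤ) ^ (n + j) * (Nat.factorial j) * stirling n j)
            * ((j.choose m : ℤ) * (Nat.factorial m) * stirling (k+1) (m+1)) := by
    intro j hj
    have hjn : j + 1 ≤ n + 1 := by simp at hj; omega
    rw [lemB j k, Finset.mul_sum,
      Finset.sum_subset (Finset.range_subset_range.2 hjn)
        (fun m _ hm => by
          simp only [Finset.mem_range, not_lt] at hm
          have : j.choose m = 0 := Nat.choose_eq_zero_of_lt (by omega)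
          simp [this])]
  rw [Finset.sum_congr rfl hrhs, Finset.sum_comm]
  have hinner : ∀ m ∈ Finset.range (n+1),
      (∑ j ∈ Finset.range (n+1),
        ((-1 : ℤ) ^ (n + j) * (Nat.factorial j) * stirling n j)
          * ((j.choose m : ℤ) * (Nat.factorial m) * stirling (k+1) (m+1)))
      = ((Nat.factorial m : ℤ) * stirling (n+1) (m+1))
          * ((Nat.factorial m : ℤ) * stirling (k+1) (m+1)) := by
    intro m _
    rw [← lemA n m, Finset.sum_mul]
    refine Finset.sum_congr rfl fun j _ => ?_
    ring
  rw [Finset.sum_congr rfl hinner]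
  rw [Finset.sum_subset (Finset.range_subset_range.2 (show min n k + 1 ≤ n + 1 by omega))
    (fun m hm hm2 => by
      simp only [Finset.mem_range, not_lt] at hm hm2
      have : stirling (k+1) (m+1) = 0 := stirling_eq_zero_of_lt _ _ (by omega)
      simp [this])]
  refine Finset.sum_congr rfl fun m _ => ?_
  ring
end

section
/- For all positive integers n and k: ∑_{m=0}^{min(n,k)} (m!)² S(n+1,m+1) S(k+1,m+1) = ∑_{m=0}^{min(n,k)} ∑_{i=0}^{n} ∑_{j=0}^{k} A(n,i) A(k,j) C(n+1-i, m+1-i) C(k+1-j, m+1-j), where A are Eulerian numbers, S Stirling numbers of the second kind, and C binomial coefficients. -/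
/-- The descent set of a permutation of `Fin k`: positions `i` (with `i+1 < k`)
such that `π i > π (i+1)`. -/
def descentSet (k : ℕ) (π : Equiv.Perm (Fin k)) : Finset (Fin (k - 1)) :=
  Finset.univ.filter fun i =>
    π ⟨i.1 + 1, by have := i.isLt; omega⟩ < π ⟨i.1, by have := i.isLt; omega⟩

/-- The Eulerian number `eulerian k j` counts permutations of `{1,…,k}`
with exactly `j - 1` descents (equivalently, `j` ascending runs). -/
def eulerian (k j : ℕ) : ℕ :=
  (Finset.univ.filter fun π : Equiv.Perm (Fin k) =>
    (descentSet k π).card + 1 = j).card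

/-!
For each `m` the summand on the left factors as `(m! S(n+1, m+1)) * (m! S(k+1, m+1))` and the one
on the right as a product of two Eulerian sums, so it suffices to show
`m! S(n+1, m+1) = ∑_π C(n - des π, m - des π)`, the sum running over permutations of
`{0, …, n-1}`, written as lists. Inserting `n` into such a permutation with `d` descents keeps `d`
at the `d + 1` slots that sit at a descent or at the end, and raises it to `d + 1` at the other
`n - d` slots. Together with Pascal's rule this shows that the right-hand side satisfies the
Stirling recurrence `R(n+1, m) = (m+1) R(n, m) + m R(n, m-1)`, and both sides agree at `n = 0`.
-/

open Finset
open scoped Nat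

namespace List

variable {α : Type*} [LinearOrder α]

def descCount : List α → ℕ
  | [] => 0
  | [_] => 0
  | a :: b :: t => (if b < a then 1 else 0) + descCount (b :: t)

/-- Slot `p` of `l` is the gap before `l[p]` (slot `l.length` is the end). Inserting an element
larger than every entry of `l` creates no new descent exactly at the end and at descents. -/
def noNewDescentAt : List α → ℕ → Bool
  | l, 0 => l.isEmpty
  | [], _ + 1 => true
  | [_], _ + 1 => true
  | a :: b :: _, 1 => decide (b < a)
  | _ :: b :: t, p + 2 => noNewDescentAt (b :: t) (p + 1)

theorem descCount_insertIdx_of_forall_lt {M : α} :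
    ∀ (l : List α) (p : ℕ), p ≤ l.length → (∀ x ∈ l, x < M) →
      (l.insertIdx p M).descCount = l.descCount + if l.noNewDescentAt p then 0 else 1
  | [], 0, _, _ => rfl
  | a :: t, 0, _, hM => by
    simp [descCount, noNewDescentAt, hM a mem_cons_self, add_comm]
  | [a], 1, _, hM => by
    simp [descCount, noNewDescentAt, (hM a mem_cons_self).not_gt]
  | a :: b :: t, 1, _, hM => by
    simp only [insertIdx_succ_cons, insertIdx_zero, descCount, noNewDescentAt,
      (hM a mem_cons_self).not_gt, hM b (by simp), decide_eq_true_eq, if_true, if_false]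
    split_ifs <;> omega
  | a :: b :: t, p + 2, hp, hM => by
    have ih := descCount_insertIdx_of_forall_lt (b :: t) (p + 1) (by simpa using hp)
      (fun x hx => hM x (mem_cons_of_mem a hx))
    change (if b < a then 1 else 0) + ((b :: t).insertIdx (p + 1) M).descCount =
      (if b < a then 1 else 0) + (b :: t).descCount + _
    rw [ih, add_assoc]
    rfl

theorem card_noNewDescentAt :
    ∀ l : List α, #{p ∈ Finset.range (l.length + 1) | l.noNewDescentAt p} = l.descCount + 1
  | [] => rfl
  | [_] => rfl
  | a :: b :: t => by
    have ih := card_noNewDescentAt (b :: t)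
    rw [card_filter, Finset.sum_range_succ'] at ih
    have hshift : ∀ p, (a :: b :: t).noNewDescentAt (p + 1 + 1) =
        (b :: t).noNewDescentAt (p + 1) := fun _ => rfl
    have hfront : ∀ (x : α) l, (x :: l).noNewDescentAt 0 = false := fun _ _ => rfl
    have hfirst : (a :: b :: t).noNewDescentAt (0 + 1) = decide (b < a) := rfl
    rw [card_filter, length_cons, Finset.sum_range_succ', Finset.sum_range_succ']
    simp only [hshift, hfront, hfirst, descCount, decide_eq_true_eq, Bool.false_eq_true,
      if_false, length_cons] at ih ⊢
    omega

theorem descCount_le_length (l : List α) : l.descCount ≤ l.length := by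
  have := card_filter_le (Finset.range (l.length + 1)) (l.noNewDescentAt ·)
  rw [card_noNewDescentAt, card_range] at this
  omega

theorem sum_insertIdx_descCount {β : Type*} [AddCommMonoid β] {M : α} (l : List α)
    (hM : ∀ x ∈ l, x < M) (f : ℕ → β) :
    ∑ p ∈ Finset.range (l.length + 1), f (l.insertIdx p M).descCount =
      (l.descCount + 1) • f l.descCount + (l.length - l.descCount) • f (l.descCount + 1) := by
  have hslot : ∀ p ∈ Finset.range (l.length + 1), f (l.insertIdx p M).descCount =
      if l.noNewDescentAt p then f l.descCount else f (l.descCount + 1) := fun p hp => by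
    rw [descCount_insertIdx_of_forall_lt l p (Nat.lt_succ_iff.1 (mem_range.1 hp)) hM]
    split_ifs <;> rfl
  have hbad :=
    card_filter_add_card_filter_not (s := Finset.range (l.length + 1)) (l.noNewDescentAt ·)
  rw [card_noNewDescentAt, card_range] at hbad
  rw [sum_congr rfl hslot, sum_ite, sum_const, sum_const, card_noNewDescentAt]
  congr 2
  omega

theorem descCount_ofFn {n : ℕ} (f : Fin (n + 1) → α) :
    (ofFn f).descCount = #{i : Fin n | f i.succ < f i.castSucc} := by
  induction n with
  | zero => rfl
  | succ n ih =>
    rw [ofFn_succ, ofFn_succ, descCount, ← ofFn_succ (f := fun i => f i.succ),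
      ih (fun i => f i.succ), card_filter, card_filter, Fin.sum_univ_succ]
    rfl

theorem idxOf_insertIdx_of_notMem {β : Type*} [DecidableEq β] {a : β} :
    ∀ (l : List β) (p : ℕ), p ≤ l.length → a ∉ l → (l.insertIdx p a).idxOf a = p
  | l, 0, _, _ => by simp
  | [], _ + 1, hp, _ => by simp at hp
  | b :: t, p + 1, hp, ha => by
    have hb : b ≠ a := by rintro rfl; exact ha mem_cons_self
    rw [insertIdx_succ_cons, idxOf_cons_ne _ hb,
      idxOf_insertIdx_of_notMem t p (by simpa using hp) (fun h => ha (mem_cons_of_mem b h))]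

end List

def rangePerms (n : ℕ) : Finset (List ℕ) := (List.range n).permutations.toFinset

theorem mem_rangePerms {n : ℕ} {l : List ℕ} : l ∈ rangePerms n ↔ l.Perm (List.range n) := by
  simp [rangePerms, List.mem_permutations]

theorem card_rangePerms (n : ℕ) : #(rangePerms n) = n ! := by
  rw [rangePerms, List.toFinset_card_of_nodup (List.nodup_permutations _ List.nodup_range),
    List.length_permutations, List.length_range]

theorem injective_ofFn_perm (n : ℕ) :
    Function.Injective fun π : Equiv.Perm (Fin n) => List.ofFn fun i => (π i : ℕ) :=
  fun _ _ h => Equiv.ext fun i => Fin.ext (congrFun (List.ofFn_injective h) i)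

theorem image_ofFn_perm_eq_rangePerms (n : ℕ) :
    univ.image (fun π : Equiv.Perm (Fin n) => List.ofFn fun i => (π i : ℕ)) = rangePerms n := by
  refine eq_of_subset_of_card_le (fun l hl => ?_) ?_
  · obtain ⟨π, -, rfl⟩ := mem_image.1 hl
    rw [mem_rangePerms, List.ofFn_eq_map, ← List.map_coe_finRange_eq_range,
      ← Function.comp_def, ← List.map_map]
    exact π.map_finRange_perm.map _
  · rw [card_image_of_injective _ (injective_ofFn_perm n), card_univ, Fintype.card_perm,
      Fintype.card_fin, card_rangePerms]

theorem length_of_mem_rangePerms {n : ℕ} {l : List ℕ} (hl : l ∈ rangePerms n) :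
    l.length = n := by
  rw [(mem_rangePerms.1 hl).length_eq, List.length_range]

theorem lt_of_mem_of_mem_rangePerms {n x : ℕ} {l : List ℕ} (hl : l ∈ rangePerms n)
    (hx : x ∈ l) : x < n := by
  simpa using (mem_rangePerms.1 hl).subset hx

theorem self_notMem_of_mem_rangePerms {n : ℕ} {l : List ℕ} (hl : l ∈ rangePerms n) :
    n ∉ l := fun h => lt_irrefl n (lt_of_mem_of_mem_rangePerms hl h)

theorem injOn_insertIdx_rangePerms (n : ℕ) :
    Set.InjOn (fun lp : List ℕ × ℕ => lp.1.insertIdx lp.2 n)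
      ↑(rangePerms n ×ˢ range (n + 1)) := by
  rintro ⟨l, p⟩ hlp ⟨l', p'⟩ hlp' h
  simp only [coe_product, Set.mem_prod, mem_coe, mem_range] at hlp hlp' h
  have hp : p = p' := by
    rw [← List.idxOf_insertIdx_of_notMem l p (by rw [length_of_mem_rangePerms hlp.1]; omega)
      (self_notMem_of_mem_rangePerms hlp.1), h, List.idxOf_insertIdx_of_notMem l' p'
      (by rw [length_of_mem_rangePerms hlp'.1]; omega) (self_notMem_of_mem_rangePerms hlp'.1)]
  subst hp
  rw [Prod.mk.injEq, ← List.eraseIdx_insertIdx_self (l := l) (i := p) n, h,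
    List.eraseIdx_insertIdx_self]
  exact ⟨rfl, rfl⟩

theorem image_insertIdx_eq_rangePerms (n : ℕ) :
    (rangePerms n ×ˢ range (n + 1)).image (fun lp => lp.1.insertIdx lp.2 n) =
      rangePerms (n + 1) := by
  refine eq_of_subset_of_card_le (fun l' hl' => ?_) ?_
  · obtain ⟨⟨l, p⟩, hlp, rfl⟩ := mem_image.1 hl'
    rw [mem_product, mem_range] at hlp
    rw [mem_rangePerms, List.range_succ]
    exact (List.perm_insertIdx n l (by rw [length_of_mem_rangePerms hlp.1]; omega)).trans
      (((mem_rangePerms.1 hlp.1).cons n).trans (List.perm_append_singleton n _).symm)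
  · rw [card_image_of_injOn (injOn_insertIdx_rangePerms n), card_product, card_range,
      card_rangePerms, card_rangePerms, Nat.factorial_succ, mul_comm]

theorem sum_rangePerms_succ {β : Type*} [AddCommMonoid β] (n : ℕ) (F : List ℕ → β) :
    ∑ l' ∈ rangePerms (n + 1), F l' =
      ∑ l ∈ rangePerms n, ∑ p ∈ range (n + 1), F (l.insertIdx p n) := by
  rw [← image_insertIdx_eq_rangePerms, sum_image (injOn_insertIdx_rangePerms n), sum_product]

/-- `C(n - e, m - e)`, read as `0` when `e > m` (where truncated subtraction would give `1`). -/
def shiftedChoose (n m e : ℕ) : ℕ := if e ≤ m then (n - e).choose (m - e) else 0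

theorem shiftedChoose_succ_succ_succ (n m e : ℕ) :
    shiftedChoose (n + 1) (m + 1) (e + 1) = shiftedChoose n m e := by
  simp only [shiftedChoose, Nat.add_le_add_iff_right, Nat.add_sub_add_right]

theorem succ_mul_shiftedChoose_add {n m e : ℕ} (he : e ≤ n) :
    (e + 1) * shiftedChoose (n + 1) m e + (n - e) * shiftedChoose (n + 1) m (e + 1) =
      (m + 1) * shiftedChoose n m e + m * shiftedChoose n (m - 1) e := by
  obtain ⟨a, rfl⟩ := Nat.exists_eq_add_of_le he
  rcases lt_trichotomy m e with hm | hm | hm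
  · simp [shiftedChoose, hm.not_ge, show ¬e + 1 ≤ m by omega, show ¬e ≤ m - 1 by omega]
  · subst m
    rcases Nat.eq_zero_or_pos e with rfl | hpos
    · simp [shiftedChoose]
    · simp [shiftedChoose, show ¬e ≤ e - 1 by omega]
  · obtain ⟨k, rfl⟩ := Nat.exists_eq_add_of_lt hm
    have hrow := Nat.add_one_mul_choose_eq a k
    rw [Nat.choose_succ_succ] at hrow
    simp only [shiftedChoose, Nat.succ_eq_add_one, add_assoc, le_add_iff_nonneg_right, zero_le,
      le_add_iff_nonneg_left, add_le_add_iff_left, ↓reduceIte, add_tsub_cancel_left,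
      add_tsub_cancel_right, Nat.add_sub_add_left, Nat.add_succ_sub_one, Nat.reduceAdd,
      Nat.choose_succ_succ] at hrow ⊢
    nlinarith [hrow]

theorem sum_rangePerms_shiftedChoose_succ (n m : ℕ) :
    ∑ l ∈ rangePerms (n + 1), shiftedChoose (n + 1) m l.descCount =
      (m + 1) * ∑ l ∈ rangePerms n, shiftedChoose n m l.descCount +
        m * ∑ l ∈ rangePerms n, shiftedChoose n (m - 1) l.descCount := by
  rw [sum_rangePerms_succ, mul_sum, mul_sum, ← sum_add_distrib]
  refine sum_congr rfl fun l hl => ?_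
  have hlt : ∀ x ∈ l, x < n := fun x => lt_of_mem_of_mem_rangePerms hl
  obtain rfl := length_of_mem_rangePerms hl
  rw [l.sum_insertIdx_descCount hlt, smul_eq_mul, smul_eq_mul,
    succ_mul_shiftedChoose_add l.descCount_le_length]

theorem factorial_mul_stirling_succ (n m : ℕ) :
    m ! * stirling (n + 1) (m + 1) = ∑ l ∈ rangePerms n, shiftedChoose n m l.descCount := by
  induction n generalizing m with
  | zero =>
    have : rangePerms 0 = {[]} := by ext l; simp [mem_rangePerms]
    rw [this, sum_singleton]
    cases m <;> simp [stirling, shiftedChoose, List.descCount]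
  | succ n ih =>
    rw [sum_rangePerms_shiftedChoose_succ, ← ih, stirling]
    cases m with
    | zero => simp [stirling]
    | succ m => rw [Nat.add_sub_cancel, ← ih, Nat.factorial_succ]; ring

theorem descCount_ofFn_perm {n : ℕ} (π : Equiv.Perm (Fin n)) :
    (List.ofFn fun i => (π i : ℕ)).descCount = #(descentSet n π) := by
  cases n with
  | zero => rfl
  | succ n => exact List.descCount_ofFn _

theorem sum_eulerian_mul {n : ℕ} (hn : 0 < n) (f : ℕ → ℕ) :
    ∑ i ∈ range (n + 1), eulerian n i * f i =
      ∑ l ∈ rangePerms n, f (l.descCount + 1) := by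
  rw [← image_ofFn_perm_eq_rangePerms, sum_image (injective_ofFn_perm n).injOn]
  simp only [descCount_ofFn_perm]
  have hmaps : ∀ π ∈ (univ : Finset (Equiv.Perm (Fin n))),
      #(descentSet n π) + 1 ∈ range (n + 1) := fun π _ => by
    have := (descentSet n π).card_le_univ
    rw [Fintype.card_fin] at this
    rw [mem_range]
    omega
  rw [← sum_fiberwise_of_maps_to hmaps]
  refine sum_congr rfl fun i _ => ?_
  rw [sum_congr rfl fun π hπ => by rw [(mem_filter.1 hπ).2], sum_const, smul_eq_mul]
  rfl

theorem sum_eulerian_mul_choose {n : ℕ} (hn : 0 < n) (m : ℕ) :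
    ∑ i ∈ range (n + 1),
        eulerian n i * (if i ≤ m + 1 then (n + 1 - i).choose (m + 1 - i) else 0) =
      m ! * stirling (n + 1) (m + 1) := by
  change ∑ i ∈ range (n + 1), eulerian n i * shiftedChoose (n + 1) (m + 1) i = _
  rw [sum_eulerian_mul hn, factorial_mul_stirling_succ]
  simp only [shiftedChoose_succ_succ_succ]

/-- In the double-Eulerian formula the binomial coefficient `C(a, b)` is understood to
vanish when the lower index `b = m + 1 - i` is negative, i.e. when `i > m + 1`;
this is encoded by the `if` guards below (in ℕ, `m + 1 - i` would otherwise truncate). -/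
theorem polyBernoulli_eq_double_eulerian (n k : ℕ) (hn : 0 < n) (hk : 0 < k) :
    (∑ m ∈ Finset.range (min n k + 1),
        (Nat.factorial m) ^ 2 * stirling (n + 1) (m + 1) * stirling (k + 1) (m + 1)) =
      ∑ m ∈ Finset.range (min n k + 1), ∑ i ∈ Finset.range (n + 1), ∑ j ∈ Finset.range (k + 1),
        eulerian n i * eulerian k j *
          (if i ≤ m + 1 then Nat.choose (n + 1 - i) (m + 1 - i) else 0) *
          (if j ≤ m + 1 then Nat.choose (k + 1 - j) (m + 1 - j) else 0) := by
  refine sum_congr rfl fun m _ => ?_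
  calc m ! ^ 2 * stirling (n + 1) (m + 1) * stirling (k + 1) (m + 1)
      = (m ! * stirling (n + 1) (m + 1)) * (m ! * stirling (k + 1) (m + 1)) := by ring
    _ = _ := by
      rw [← sum_eulerian_mul_choose hn, ← sum_eulerian_mul_choose hk, sum_mul_sum]
      exact sum_congr rfl fun i _ => sum_congr rfl fun j _ => by ring
end

section
/- For all positive integers n and k: ∑_{m=0}^{min(n,k)} (m!)² S(n+1,m+1) S(k+1,m+1) = ∑_{j=0}^{k} A(k,j) ∑_{m=0}^{j-1} (-1)^m C(j-1, m) (k+1-m)^n. -/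
/-!
Both sides equal the alternating sum `∑_{c ≤ k} (-1)^(k-c) c! S(k,c) (c+1)^n`.

For the left side, expand `(c+1)^n = ∑_m m! S(n+1,m+1) C(c,m)` and use
`∑_c (-1)^(k+c) c! S(k,c) C(c,m) = m! S(k+1,m+1)`, which follows from the recurrence of `S`.

For the right side, the key input is `∑_π C(des π, k-c) = c! S(k,c)`. By Vandermonde its binomial
transform is Worpitzky's identity `∑_π C(b + des π, k) = b^k`, while that of `c! S(k,c)` is
`b^k = ∑_c c! S(k,c) C(b,c)`; binomial inversion concludes. Worpitzky's identity is proved by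
sorting: every `f : Fin k → Fin b` has a unique permutation `π` making `f ∘ π` increasing, with ties
allowed only at descents of `π`. Adding to each position the number of earlier descents turns
`f ∘ π` into a strictly increasing map into `Fin (b + des π)`, and there are `C(b + des π, k)` of
those.
-/

open Finset Nat

theorem stirling_eq_stirlingSecond : stirling = stirlingSecond := by
  ext n r
  induction n generalizing r with
  | zero => cases r <;> rfl
  | succ n ih => cases r <;> simp [stirling, stirlingSecond, ih]

theorem Nat.mul_descFactorial (b c : ℕ) :
    b * b.descFactorial c = b.descFactorial (c + 1) + c * b.descFactorial c := by
  rw [descFactorial_succ]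
  rcases le_or_gt c b with h | h
  · rw [← add_mul, Nat.sub_add_cancel h]
  · simp [descFactorial_eq_zero_iff_lt.mpr h]

theorem Nat.pow_eq_sum_stirlingSecond_mul_descFactorial (b k : ℕ) :
    b ^ k = ∑ c ∈ range (k + 1), stirlingSecond k c * b.descFactorial c := by
  induction k with
  | zero => simp
  | succ k ih =>
    have shifted : ∑ c ∈ range (k + 1), c * stirlingSecond k c * b.descFactorial c =
        ∑ c ∈ range (k + 1), (c + 1) * stirlingSecond k (c + 1) * b.descFactorial (c + 1) := by
      rw [sum_range_succ', sum_range_succ, stirlingSecond_eq_zero_of_lt (lt_add_one k)]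
      simp
    rw [sum_range_succ', stirlingSecond_succ_zero, zero_mul, add_zero,
      sum_congr rfl fun c _ => by rw [stirlingSecond_succ_succ, add_mul], sum_add_distrib,
      ← shifted, pow_succ, ih, sum_mul, ← sum_add_distrib]
    refine sum_congr rfl fun c _ => ?_
    rw [mul_assoc, mul_comm _ b, mul_descFactorial]
    ring

theorem Nat.succ_pow_eq_sum_stirlingSecond_mul_descFactorial (c n : ℕ) :
    (c + 1) ^ n = ∑ m ∈ range (n + 1), stirlingSecond (n + 1) (m + 1) * c.descFactorial m := by
  refine Nat.eq_of_mul_eq_mul_left (Nat.add_one_pos c) ?_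
  rw [← pow_succ', pow_eq_sum_stirlingSecond_mul_descFactorial, sum_range_succ',
    stirlingSecond_succ_zero, zero_mul, add_zero, mul_sum]
  refine sum_congr rfl fun m _ => ?_
  rw [succ_descFactorial_succ]
  ring

theorem sum_neg_one_pow_mul_factorial_mul_stirlingSecond_succ (k : ℕ) (g : ℕ → ℤ) :
    ∑ c ∈ range (k + 2), (-1) ^ (k + 1 + c) * (c ! : ℤ) * stirlingSecond (k + 1) c * g c =
      ∑ c ∈ range (k + 1),
        (-1) ^ (k + c) * (c ! : ℤ) * stirlingSecond k c * ((c + 1) * g (c + 1) - c * g c) := by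
  set F : ℕ → ℤ := fun c => (-1) ^ (k + c) * (c ! : ℤ) * stirlingSecond k c * (c * g c)
  have shifted : ∑ c ∈ range (k + 1), F (c + 1) = ∑ c ∈ range (k + 1), F c := by
    have h := (sum_range_succ' F (k + 1)).symm.trans (sum_range_succ F (k + 1))
    simpa [F, stirlingSecond_eq_zero_of_lt (lt_add_one k)] using h
  have term (c : ℕ) : (-1) ^ (k + 1 + (c + 1)) * ((c + 1) ! : ℤ) *
      stirlingSecond (k + 1) (c + 1) * g (c + 1) =
        (-1) ^ (k + c) * ((c + 1) ! : ℤ) * stirlingSecond k c * g (c + 1) - F (c + 1) := by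
    simp only [F, stirlingSecond_succ_succ, factorial_succ]
    push_cast
    ring
  rw [sum_range_succ', sum_congr rfl fun c _ => term c, sum_sub_distrib, shifted,
    stirlingSecond_succ_zero, ← sum_sub_distrib]
  simp only [F, factorial_succ, Nat.cast_zero, mul_zero, zero_mul, add_zero]
  refine sum_congr rfl fun c _ => ?_
  push_cast
  ring

theorem sum_neg_one_pow_mul_factorial_mul_stirlingSecond_mul_choose (k m : ℕ) :
    ∑ c ∈ range (k + 1), (-1) ^ (k + c) * (c ! : ℤ) * stirlingSecond k c * c.choose m =
      m ! * stirlingSecond (k + 1) (m + 1) := by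
  induction k generalizing m with
  | zero => cases m <;> simp [stirlingSecond_self, stirlingSecond_eq_zero_of_lt]
  | succ k ih =>
    rw [sum_neg_one_pow_mul_factorial_mul_stirlingSecond_succ]
    cases m with
    | zero =>
      simpa [stirlingSecond_succ_succ (k + 1) 0] using ih 0
    | succ m =>
      have pascal (c : ℕ) :
          ((c : ℤ) + 1) * ((c + 1).choose (m + 1) : ℕ) - c * (c.choose (m + 1) : ℕ) =
            (m + 2) * (c.choose (m + 1) : ℕ) + (m + 1) * (c.choose m : ℕ) := by
        have p : ((c + 1).choose (m + 1) : ℤ) = c.choose m + c.choose (m + 1) := by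
          exact_mod_cast choose_succ_succ c m
        have q : ((c + 1) * c.choose m : ℤ) = (c + 1).choose (m + 1) * (m + 1) := by
          exact_mod_cast add_one_mul_choose_eq c m
        linear_combination ((c : ℤ) + m + 2) * p + q
      calc _ = (m + 2) * ∑ c ∈ range (k + 1),
                (-1) ^ (k + c) * (c ! : ℤ) * stirlingSecond k c * c.choose (m + 1) +
              (m + 1) * ∑ c ∈ range (k + 1),
                (-1) ^ (k + c) * (c ! : ℤ) * stirlingSecond k c * c.choose m := by
            rw [mul_sum, mul_sum, ← sum_add_distrib]
            refine sum_congr rfl fun c _ => ?_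
            rw [pascal]
            ring
        _ = _ := by
            rw [ih, ih, stirlingSecond_succ_succ (k + 1) (m + 1), factorial_succ]
            push_cast
            ring

theorem sum_sq_factorial_mul_stirlingSecond_mul_stirlingSecond (n k : ℕ) :
    ∑ m ∈ range (n + 1),
        (m ! ^ 2 * stirlingSecond (n + 1) (m + 1) * stirlingSecond (k + 1) (m + 1) : ℤ) =
      ∑ c ∈ range (k + 1), (-1) ^ (k - c) * (c ! * stirlingSecond k c : ℕ) * ((c : ℤ) + 1) ^ n := by
  have expand (c : ℕ) : ((c : ℤ) + 1) ^ n =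
      ∑ m ∈ range (n + 1), (stirlingSecond (n + 1) (m + 1) * m ! : ℤ) * c.choose m := by
    exact_mod_cast (succ_pow_eq_sum_stirlingSecond_mul_descFactorial c n).trans
      (sum_congr rfl fun m _ => by rw [descFactorial_eq_factorial_mul_choose, mul_assoc])
  have sign {c : ℕ} (hc : c ∈ range (k + 1)) : (-1 : ℤ) ^ (k - c) = (-1) ^ (k + c) := by
    rw [show k + c = k - c + 2 * c by grind, pow_add, pow_mul]
    simp
  calc _ = ∑ m ∈ range (n + 1), (stirlingSecond (n + 1) (m + 1) * m ! : ℤ) *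
        ∑ c ∈ range (k + 1), (-1) ^ (k + c) * (c ! : ℤ) * stirlingSecond k c * c.choose m := by
        refine sum_congr rfl fun m _ => ?_
        rw [sum_neg_one_pow_mul_factorial_mul_stirlingSecond_mul_choose]
        ring
    _ = _ := by
        simp only [mul_sum]
        rw [sum_comm]
        refine sum_congr rfl fun c hc => ?_
        rw [sign hc, expand, mul_sum]
        refine sum_congr rfl fun m _ => ?_
        push_cast
        ring

theorem Finset.sum_range_choose_smul_of_le {M : Type*} [AddCommMonoid M] {d N : ℕ} (h : d ≤ N)
    (f : ℕ → M) :
    ∑ m ∈ range (N + 1), d.choose m • f m = ∑ m ∈ range (d + 1), d.choose m • f m :=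
  (sum_subset (range_subset_range.2 (by omega)) fun m _ hm => by
    simp [choose_eq_zero_of_lt (by simpa using hm)]).symm

theorem eq_of_sum_choose_smul_eq {M : Type*} [AddCancelCommMonoid M] {N : ℕ} {f g : ℕ → M}
    (h : ∀ b ≤ N, ∑ c ∈ range (N + 1), b.choose c • f c = ∑ c ∈ range (N + 1), b.choose c • g c) :
    ∀ c ≤ N, f c = g c := by
  intro c
  induction c using Nat.strong_induction_on with
  | _ c ih =>
    intro hc
    have hb := h c hc
    have lower : ∀ i ∈ range c, c.choose i • f i = c.choose i • g i := fun i hi => by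
      rw [ih i (mem_range.1 hi) ((mem_range.1 hi).le.trans hc)]
    rw [sum_range_choose_smul_of_le hc, sum_range_choose_smul_of_le hc, sum_range_succ,
      sum_range_succ, sum_congr rfl lower] at hb
    simpa using add_left_cancel hb

section Worpitzky

variable {k : ℕ}

def StrictMonoOff {α : Type*} [Preorder α] (D : Finset (Fin k)) (a : Fin (k + 1) → α) : Prop :=
  ∀ i : Fin k, a i.castSucc < a i.succ ∨ (i ∈ D ∧ a i.castSucc = a i.succ)

theorem StrictMonoOff.monotone {α : Type*} [Preorder α] {D : Finset (Fin k)}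
    {a : Fin (k + 1) → α} (h : StrictMonoOff D a) : Monotone a :=
  Fin.monotone_iff_le_succ.2 fun i => (h i).elim le_of_lt fun h => h.2.le

theorem strictMonoOff_comp_iff {α β : Type*} [LinearOrder α] [Preorder β] {f : α → β}
    (hf : StrictMono f) {D : Finset (Fin k)} {a : Fin (k + 1) → α} :
    StrictMonoOff D (f ∘ a) ↔ StrictMonoOff D a := by
  simp only [StrictMonoOff, Function.comp_apply, hf.lt_iff_lt, hf.injective.eq_iff]

instance StrictMonoOff.decidablePred {α : Type*} [LinearOrder α] (D : Finset (Fin k)) :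
    DecidablePred (StrictMonoOff (α := α) D) :=
  fun _ => by unfold StrictMonoOff; infer_instance

def countBelow (D : Finset (Fin k)) (i : Fin (k + 1)) : ℕ := #{j ∈ D | j.castSucc < i}

theorem countBelow_last (D : Finset (Fin k)) : countBelow D (Fin.last k) = #D := by
  simp [countBelow, Fin.castSucc_lt_last]

theorem countBelow_le_card (D : Finset (Fin k)) (i : Fin (k + 1)) : countBelow D i ≤ #D :=
  card_filter_le _ _

theorem countBelow_succ (D : Finset (Fin k)) (i : Fin k) :
    countBelow D i.succ = countBelow D i.castSucc + if i ∈ D then 1 else 0 := by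
  simp only [countBelow, Fin.castSucc_lt_succ_iff, Fin.castSucc_lt_castSucc_iff, card_filter,
    le_iff_lt_or_eq]
  rw [← sum_ite_eq' D i (fun _ => 1), ← sum_add_distrib]
  refine sum_congr rfl fun j _ => ?_
  split_ifs <;> grind

theorem strictMonoOff_iff_strictMono_add_countBelow (D : Finset (Fin k)) (a : Fin (k + 1) → ℕ) :
    StrictMonoOff D a ↔ StrictMono fun i => a i + countBelow D i := by
  rw [Fin.strictMono_iff_lt_succ]
  refine forall_congr' fun i => ?_
  rw [countBelow_succ]
  split_ifs with hi
  · simp only [hi, true_and]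
    omega
  · simp [hi]

theorem countBelow_le_of_strictMono (D : Finset (Fin k)) {h : Fin (k + 1) → ℕ}
    (hh : StrictMono h) (i : Fin (k + 1)) : countBelow D i ≤ h i := by
  induction i using Fin.induction with
  | zero => simp [countBelow]
  | succ i ih =>
    have := hh i.castSucc_lt_succ
    rw [countBelow_succ]
    split_ifs <;> omega

theorem card_strictMono_fin (m N : ℕ) :
    #{h : Fin m → Fin N | StrictMono h} = N.choose m := by
  rw [show N.choose m = #(powersetCard m (univ : Finset (Fin N))) by simp]
  refine card_nbij (fun h => univ.image h) (fun h hh => ?_) (fun h hh h' hh' he => ?_)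
    (fun s hs => ?_)
  · simp only [coe_filter, mem_univ, true_and, Set.mem_ofPred_eq] at hh
    simp [card_image_of_injective _ hh.injective]
  · simp only [coe_filter, mem_univ, true_and, Set.mem_ofPred_eq] at hh hh'
    dsimp only at he
    have hc : #(univ.image h) = m := by simp [card_image_of_injective _ hh.injective]
    exact (orderEmbOfFin_unique hc (fun x => mem_image_of_mem h (mem_univ x)) hh).trans
      (orderEmbOfFin_unique hc (fun x => he ▸ mem_image_of_mem h' (mem_univ x)) hh').symm
  · have hs : #s = m := (mem_powersetCard.1 hs).2
    exact ⟨s.orderEmbOfFin hs, by simpa using (s.orderEmbOfFin hs).strictMono,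
      image_orderEmbOfFin_univ s hs⟩

theorem exists_strictMonoOff_add_countBelow_eq (D : Finset (Fin k)) {b : ℕ}
    {h : Fin (k + 1) → Fin (b + #D)} (hh : StrictMono h) :
    ∃ a : Fin (k + 1) → Fin b, StrictMonoOff D a ∧ ∀ i, (a i : ℕ) + countBelow D i = h i := by
  have hh' : StrictMono fun i => (h i : ℕ) := hh
  obtain ⟨a, ha⟩ : ∃ a : Fin (k + 1) → ℕ, ∀ i, a i + countBelow D i = h i :=
    ⟨fun i => h i - countBelow D i,
      fun i => Nat.sub_add_cancel (countBelow_le_of_strictMono D hh' i)⟩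
  have hoff : StrictMonoOff D a :=
    (strictMonoOff_iff_strictMono_add_countBelow D a).2 (by simpa only [ha] using hh')
  have hlt (i : Fin (k + 1)) : a i < b := by
    have := hoff.monotone (Fin.le_last i)
    have := ha (Fin.last k)
    have := (h (Fin.last k)).isLt
    rw [countBelow_last] at *
    omega
  exact ⟨fun i => ⟨a i, hlt i⟩, (strictMonoOff_comp_iff Fin.val_strictMono).1 hoff, ha⟩

theorem card_strictMonoOff (D : Finset (Fin k)) (b : ℕ) :
    #{a : Fin (k + 1) → Fin b | StrictMonoOff D a} = (b + #D).choose (k + 1) := by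
  rw [← card_strictMono_fin]
  have shift_iff (a : Fin (k + 1) → Fin b) :
      StrictMonoOff D a ↔ StrictMono fun i => (a i : ℕ) + countBelow D i := by
    rw [← strictMonoOff_comp_iff Fin.val_strictMono, strictMonoOff_iff_strictMono_add_countBelow]
    rfl
  refine card_nbij (fun a i => ⟨a i + countBelow D i, by
      have := (a i).isLt; have := countBelow_le_card D i; omega⟩)
    (fun a ha => ?_) (fun a _ a' _ he => ?_) (fun h hh => ?_)
  · simp only [coe_filter, mem_univ, true_and, Set.mem_ofPred_eq] at ha ⊢
    exact (shift_iff a).1 ha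
  · funext i
    exact Fin.ext (by simpa using congr_arg Fin.val (congr_fun he i))
  · simp only [coe_filter, mem_univ, true_and, Set.mem_ofPred_eq] at hh
    obtain ⟨a, ha, hsum⟩ := exists_strictMonoOff_add_countBelow_eq D hh
    exact ⟨a, by simpa using ha, funext fun i => Fin.ext (hsum i)⟩

theorem mem_descentSet_iff (π : Equiv.Perm (Fin (k + 1))) (i : Fin k) :
    i ∈ descentSet (k + 1) π ↔ π i.succ < π i.castSucc := by
  simp only [descentSet, mem_filter, mem_univ, true_and]
  rfl

theorem Tuple.eq_sort_iff_strictMono {n : ℕ} {α : Type*} [LinearOrder α] {g : Fin n → α}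
    (hg : Function.Injective g) {σ : Equiv.Perm (Fin n)} :
    σ = Tuple.sort g ↔ StrictMono (g ∘ σ) := by
  rw [Tuple.eq_sort_iff]
  refine ⟨fun h => h.1.strictMono_of_injective (hg.comp σ.injective), fun h => ⟨h.monotone, ?_⟩⟩
  exact fun i j hij he => absurd (σ.injective (hg he)) hij.ne

/-- Ties in `f` are broken by decreasing index, so after sorting they sit on descents. -/
def sortKey {n : ℕ} {α : Type*} (f : Fin n → α) (x : Fin n) : Lex (α × (Fin n)ᵒᵈ) :=
  toLex (f x, OrderDual.toDual x)

theorem sortKey_injective {n : ℕ} {α : Type*} (f : Fin n → α) : Function.Injective (sortKey f) :=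
  fun _ _ h => by simpa [sortKey] using congr_arg (fun p => (ofLex p).2) h

theorem strictMono_sortKey_comp_iff {α : Type*} [LinearOrder α] (f : Fin (k + 1) → α)
    (π : Equiv.Perm (Fin (k + 1))) :
    StrictMono (sortKey f ∘ π) ↔ StrictMonoOff (descentSet (k + 1) π) (f ∘ π) := by
  rw [Fin.strictMono_iff_lt_succ]
  refine forall_congr' fun i => ?_
  simp only [Function.comp_apply, sortKey, Prod.Lex.toLex_lt_toLex, OrderDual.toDual_lt_toDual]
  rw [and_comm, ← mem_descentSet_iff]

theorem card_sort_sortKey_eq (π : Equiv.Perm (Fin (k + 1))) (b : ℕ) :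
    #{f : Fin (k + 1) → Fin b | Tuple.sort (sortKey f) = π} =
      (b + #(descentSet (k + 1) π)).choose (k + 1) := by
  rw [← card_strictMonoOff (k := k) (descentSet (k + 1) π) b]
  refine card_nbij' (· ∘ π) (· ∘ π.symm) (fun f hf => ?_) (fun a ha => ?_)
    (fun f _ => by simp [Function.comp_assoc]) (fun a _ => by simp [Function.comp_assoc])
  · simp only [coe_filter, mem_univ, true_and, Set.mem_ofPred_eq] at hf ⊢
    rwa [eq_comm, Tuple.eq_sort_iff_strictMono (sortKey_injective f),
      strictMono_sortKey_comp_iff] at hf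
  · simp only [coe_filter, mem_univ, true_and, Set.mem_ofPred_eq] at ha ⊢
    rw [eq_comm, Tuple.eq_sort_iff_strictMono (sortKey_injective _), strictMono_sortKey_comp_iff]
    simpa [Function.comp_assoc] using ha

theorem sum_choose_add_card_descentSet (k b : ℕ) :
    ∑ π : Equiv.Perm (Fin k), (b + #(descentSet k π)).choose k = b ^ k := by
  cases k with
  | zero => simp
  | succ k =>
    simp only [← card_sort_sortKey_eq]
    rw [← card_eq_sum_card_fiberwise fun _ _ => mem_univ _]
    simp

end Worpitzky

theorem sum_choose_card_descentSet (k c : ℕ) (hc : c ≤ k) :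
    ∑ π : Equiv.Perm (Fin k), (#(descentSet k π)).choose (k - c) = c ! * stirlingSecond k c := by
  refine eq_of_sum_choose_smul_eq (N := k)
    (f := fun c => ∑ π : Equiv.Perm (Fin k), (#(descentSet k π)).choose (k - c))
    (g := fun c => c ! * stirlingSecond k c) (fun b _ => ?_) c hc
  calc _ = ∑ π : Equiv.Perm (Fin k), (b + #(descentSet k π)).choose k := by
        simp only [smul_eq_mul, mul_sum]
        rw [sum_comm]
        refine sum_congr rfl fun π _ => ?_
        rw [add_choose_eq, Nat.sum_antidiagonal_eq_sum_range_succ fun i j =>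
          b.choose i * (#(descentSet k π)).choose j]
    _ = b ^ k := sum_choose_add_card_descentSet k b
    _ = _ := by
        rw [pow_eq_sum_stirlingSecond_mul_descFactorial]
        refine sum_congr rfl fun c _ => ?_
        rw [descFactorial_eq_factorial_mul_choose, smul_eq_mul]
        ring

theorem sum_sum_choose_card_descentSet_smul {M : Type*} [AddCommMonoid M] (k : ℕ) (g : ℕ → M) :
    ∑ π : Equiv.Perm (Fin k), ∑ m ∈ range (k + 1), (#(descentSet k π)).choose m • g m =
      ∑ c ∈ range (k + 1), (c ! * stirlingSecond k c) • g (k - c) := by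
  rw [sum_comm, ← sum_range_reflect]
  refine sum_congr rfl fun c hc => ?_
  rw [← sum_smul, add_tsub_cancel_right, sum_choose_card_descentSet k c (by simpa using hc)]

theorem card_descentSet_le (k : ℕ) (π : Equiv.Perm (Fin k)) : #(descentSet k π) ≤ k - 1 := by
  simpa using (descentSet k π).card_le_univ

theorem sum_eulerian_smul {M : Type*} [AddCommMonoid M] {k : ℕ} (hk : 0 < k) (f : ℕ → M) :
    ∑ j ∈ range (k + 1), eulerian k j • f j =
      ∑ π : Equiv.Perm (Fin k), f (#(descentSet k π) + 1) := by
  have hmaps (π : Equiv.Perm (Fin k)) (_ : π ∈ univ) : #(descentSet k π) + 1 ∈ range (k + 1) := by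
    have := card_descentSet_le k π
    simp only [mem_range]
    omega
  rw [← sum_fiberwise_of_maps_to hmaps]
  refine sum_congr rfl fun j _ => ?_
  rw [sum_congr rfl fun π hπ => by rw [(mem_filter.1 hπ).2], sum_const]
  rfl

theorem polyBernoulli_eq_eulerian_incl_excl_general (n k : ℕ) (hk : 0 < k) :
    (∑ m ∈ Finset.range (min n k + 1),
        ((Nat.factorial m) ^ 2 * stirling (n + 1) (m + 1) * stirling (k + 1) (m + 1) : ℤ)) =
      ∑ j ∈ Finset.range (k + 1), (eulerian k j : ℤ) *
        ∑ m ∈ Finset.range (j - 1 + 1),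
          (-1 : ℤ) ^ m * Nat.choose (j - 1) m * ((k + 1 - m : ℕ) : ℤ) ^ n := by
  rw [stirling_eq_stirlingSecond]
  calc _ = ∑ m ∈ range (n + 1),
        (m ! ^ 2 * stirlingSecond (n + 1) (m + 1) * stirlingSecond (k + 1) (m + 1) : ℤ) := by
        refine sum_subset (range_subset_range.2 (by omega)) fun m hmn hm => ?_
        simp only [mem_range] at hmn hm
        simp [stirlingSecond_eq_zero_of_lt (show k + 1 < m + 1 by omega)]
    _ = ∑ π : Equiv.Perm (Fin k), ∑ m ∈ range (k + 1),
          (#(descentSet k π)).choose m • ((-1 : ℤ) ^ m * ((k + 1 - m : ℕ) : ℤ) ^ n) := by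
        rw [sum_sq_factorial_mul_stirlingSecond_mul_stirlingSecond,
          sum_sum_choose_card_descentSet_smul]
        refine sum_congr rfl fun c hc => ?_
        rw [nsmul_eq_mul, show k + 1 - (k - c) = c + 1 by simp at hc; omega]
        push_cast
        ring
    _ = ∑ j ∈ range (k + 1), eulerian k j • ∑ m ∈ range (j - 1 + 1),
          (j - 1).choose m • ((-1 : ℤ) ^ m * ((k + 1 - m : ℕ) : ℤ) ^ n) := by
        rw [sum_eulerian_smul hk]
        refine sum_congr rfl fun π _ => ?_
        have := card_descentSet_le k π
        rw [add_tsub_cancel_right, sum_range_choose_smul_of_le (by omega)]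
    _ = _ := by simp only [nsmul_eq_mul, mul_left_comm, mul_assoc]

theorem polyBernoulli_eq_eulerian_incl_excl (n k : ℕ) (hn : 0 < n) (hk : 0 < k) :
    (∑ m ∈ Finset.range (min n k + 1),
        ((Nat.factorial m) ^ 2 * stirling (n + 1) (m + 1) * stirling (k + 1) (m + 1) : ℤ)) =
      ∑ j ∈ Finset.range (k + 1), (eulerian k j : ℤ) *
        ∑ m ∈ Finset.range (j - 1 + 1),
          (-1 : ℤ) ^ m * Nat.choose (j - 1) m * ((k + 1 - m : ℕ) : ℤ) ^ n :=
  polyBernoulli_eq_eulerian_incl_excl_general n k hk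
end

section
/- For all positive integers k, j and n, the two expressions for the count w(k-j) of valid words agree: ∑_{m=0}^{j+1} C(j+1, m) (m+k-j)! S(n, m+k-j) = ∑_{m=0}^{k-j} (-1)^m C(k-j, m) (k+1-m)^n, for all 0 ≤ j ≤ k. -/
open Finset in

lemma surj (n r : ℕ) :
    ((Nat.factorial r) * stirling n r : ℤ) =
      ∑ t ∈ range (r+1), (-1:ℤ)^(r+t) * (r.choose t) * (t:ℤ)^n := by
  induction n generalizing r with
  | zero =>
    simp only [pow_zero, mul_one]
    cases r with
    | zero => simp [stirling]
    | succ r =>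
      have h : ∀ t : ℕ, (-1:ℤ)^(r+1+t) * ((r+1).choose t)
          = (-1)^(r+1) * ((-1)^t * ((r+1).choose t)) := by
        intro t; rw [pow_add]; ring
      rw [sum_congr rfl fun t _ => h t, ← mul_sum, Int.alternating_sum_range_choose]
      simp [stirling]
  | succ n ih =>
    cases r with
    | zero => simp [stirling]
    | succ s =>
      have key : ((Nat.factorial (s+1)) * stirling (n+1) (s+1) : ℤ)
          = (s+1) * ((Nat.factorial (s+1) * stirling n (s+1) : ℤ)
              + (Nat.factorial s * stirling n s : ℤ)) := by
        simp only [stirling, Nat.factorial_succ]; push_cast; ring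
      rw [key, ih (s+1), ih s]
      have hext : ∑ t ∈ range (s+2), (-1:ℤ)^(s+t) * (s.choose t) * (t:ℤ)^n
          = ∑ t ∈ range (s+1), (-1:ℤ)^(s+t) * (s.choose t) * (t:ℤ)^n := by
        rw [sum_range_succ]; simp [Nat.choose_succ_self]
      rw [← hext, ← sum_add_distrib, mul_sum]
      apply sum_congr rfl
      intro t ht
      have htle : t ≤ s + 1 := by simpa [Nat.lt_succ_iff] using mem_range.mp ht
      have hch : ((s:ℤ)+1) * (s.choose t) = ((s+1).choose t) * ((s:ℤ)+1-t) := by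
        have h2 : ((s.choose t * (s+1) : ℕ) : ℤ) = (((s+1).choose t * (s+1-t) : ℕ) : ℤ) :=
          congrArg _ (Nat.choose_mul_succ_eq s t)
        push_cast [htle] at h2
        linarith
      have hsign : (-1:ℤ)^(s+t) = -(-1:ℤ)^(s+1+t) := by
        rw [show s+1+t = (s+t)+1 by omega, pow_succ]; ring
      rw [hsign, pow_succ]
      push_cast
      linear_combination (-((-1:ℤ)^(s+1+t) * (t:ℤ)^n)) * hch

open Finset in

lemma diff (p : ℕ) : ∀ d t : ℕ,
    ∑ m ∈ range (p+1), (-1:ℤ)^m * (p.choose m) * ((m+d).choose t)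
      = (-1:ℤ)^p * (if p ≤ t then ((d.choose (t-p) : ℕ) : ℤ) else 0) := by
  induction p with
  | zero => intro d t; simp
  | succ p ih =>
    intro d t
    rw [Finset.sum_range_succ']
    have hsplit : ∀ m : ℕ, (-1:ℤ)^(m+1) * ((p+1).choose (m+1)) * ((m+1+d).choose t)
        = -((-1:ℤ)^m * (p.choose m) * ((m+(d+1)).choose t))
          + (-1:ℤ)^(m+1) * (p.choose (m+1)) * (((m+1)+d).choose t) := by
      intro m
      rw [Nat.choose_succ_succ]
      have : m + 1 + d = m + (d+1) := by omega
      rw [this]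
      push_cast
      ring
    rw [sum_congr rfl fun m _ => hsplit m, sum_add_distrib]
    have h1 : ∑ m ∈ range (p+1), -((-1:ℤ)^m * (p.choose m) * ((m+(d+1)).choose t))
        = -((-1:ℤ)^p * (if p ≤ t then (((d+1).choose (t-p) : ℕ) : ℤ) else 0)) := by
      rw [Finset.sum_neg_distrib, ih (d+1) t]
    have h2 : ∑ m ∈ range (p+1), (-1:ℤ)^(m+1) * (p.choose (m+1)) * (((m+1)+d).choose t)
        = (-1:ℤ)^p * (if p ≤ t then ((d.choose (t-p) : ℕ) : ℤ) else 0) - (d.choose t : ℤ) := by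
      have := ih d t
      rw [Finset.sum_range_succ'] at this
      -- this : ∑ m ∈ range p, f (m+1) + f 0 = ...
      have hp1 : (-1:ℤ)^(p+1) * (p.choose (p+1)) * (((p+1)+d).choose t) = 0 := by
        simp [Nat.choose_succ_self]
      rw [sum_range_succ, hp1, add_zero]
      simp only [pow_zero, Nat.choose_zero_right, Nat.cast_one, one_mul, zero_add] at this
      linarith
    rw [h1, h2]
    have h0 : (-1:ℤ)^0 * ((p+1).choose 0) * ((0+d).choose t) = (d.choose t : ℤ) := by simp
    rw [h0]
    -- now pure arithmetic on ite
    by_cases h : p + 1 ≤ t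
    · have hp : p ≤ t := by omega
      rw [if_pos hp, if_pos hp, if_pos h]
      have ht : t - p = (t - (p+1)) + 1 := by omega
      rw [ht, Nat.choose_succ_succ]
      push_cast
      ring
    · by_cases h' : p ≤ t
      · have ht : t = p := by omega
        rw [if_pos h', if_pos h', if_neg h]
        have : t - p = 0 := by omega
        rw [this]
        simp
        ring
      · rw [if_neg h', if_neg h', if_neg h]
        simp

open Finset in
lemma key (n d q : ℕ) :
    ∑ m ∈ range (q+1), ((q.choose m) * Nat.factorial (m+d) * stirling n (m+d) : ℤ)
      = ∑ m ∈ range (d+1), (-1:ℤ)^m * (d.choose m) * ((d + q - m : ℕ):ℤ)^n := by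
  -- Step 1: apply surjection formula and extend inner range
  have step1 : ∑ m ∈ range (q+1), ((q.choose m) * Nat.factorial (m+d) * stirling n (m+d) : ℤ)
      = ∑ m ∈ range (q+1), ∑ t ∈ range (q+d+1),
          (q.choose m : ℤ) * ((-1:ℤ)^(m+d+t) * ((m+d).choose t) * (t:ℤ)^n) := by
    apply sum_congr rfl
    intro m hm
    have hm' : m ≤ q := by simpa [Nat.lt_succ_iff] using mem_range.mp hm
    have : ((q.choose m) * Nat.factorial (m+d) * stirling n (m+d) : ℤ)
        = (q.choose m : ℤ) * ((Nat.factorial (m+d)) * stirling n (m+d) : ℤ) := by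
      push_cast; ring
    rw [this, surj n (m+d), mul_sum]
    apply sum_subset
    · intro x hx
      rw [mem_range] at hx ⊢
      omega
    · intro x _ hx
      rw [mem_range, not_lt] at hx
      have : (m+d).choose x = 0 := Nat.choose_eq_zero_of_lt (by omega)
      simp [this]
  rw [step1, sum_comm]
  -- Step 2: factor and apply diff
  have step2 : ∀ t ∈ range (q+d+1),
      ∑ m ∈ range (q+1), (q.choose m : ℤ) * ((-1:ℤ)^(m+d+t) * ((m+d).choose t) * (t:ℤ)^n)
        = ((-1:ℤ)^(d+t) * (t:ℤ)^n) *
            ((-1:ℤ)^q * (if q ≤ t then ((d.choose (t-q) : ℕ) : ℤ) else 0)) := by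
    intro t _
    rw [← diff q d t, mul_sum]
    apply sum_congr rfl
    intro m _
    rw [show m+d+t = m+(d+t) by omega, pow_add]
    ring
  rw [sum_congr rfl step2]
  -- Step 3: split range (q + (d+1)) and kill the first part
  rw [show q+d+1 = q+(d+1) by omega, Finset.sum_range_add]
  have hzero : ∑ t ∈ range q,
      ((-1:ℤ)^(d+t) * (t:ℤ)^n) *
        ((-1:ℤ)^q * (if q ≤ t then ((d.choose (t-q) : ℕ) : ℤ) else 0)) = 0 := by
    apply sum_eq_zero
    intro t ht
    rw [mem_range] at ht
    rw [if_neg (by omega)]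
    ring
  rw [hzero, zero_add]
  -- Step 4: identify with reflected RHS
  rw [← Finset.sum_range_reflect (fun m => (-1:ℤ)^m * (d.choose m) * ((d + q - m : ℕ):ℤ)^n) (d+1)]
  apply sum_congr rfl
  intro s hs
  have hsd : s ≤ d := by simpa [Nat.lt_succ_iff] using mem_range.mp hs
  rw [if_pos (by omega : q ≤ q + s)]
  have h1 : d + 1 - 1 - s = d - s := by omega
  have h2 : q + s - q = s := by omega
  have h3 : d + q - (d - s) = q + s := by omega
  have h4 : d.choose (d - s) = d.choose s := Nat.choose_symm hsd
  rw [h1, h2, h3, h4]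
  have h5 : (-1:ℤ)^(d-s) = (-1:ℤ)^(d+s) := by
    rw [show d+s = (d-s) + 2*s by omega, pow_add, pow_mul]
    norm_num
  rw [h5, show d+(q+s) = (d+s)+q by omega, pow_add]
  ring_nf
  rw [show q*2 = 2*q by omega, pow_mul]
  norm_num

theorem valid_word_count_formulas_agree (n k j : ℕ) (hn : 0 < n) (hk : 0 < k) (hj : 0 < j)
    (hjk : j ≤ k) :
    (∑ m ∈ Finset.range (j + 2),
        (Nat.choose (j + 1) m * Nat.factorial (m + k - j) * stirling n (m + k - j) : ℤ)) =
      ∑ m ∈ Finset.range (k - j + 1),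
        (-1 : ℤ) ^ m * Nat.choose (k - j) m * ((k + 1 - m : ℕ) : ℤ) ^ n := by
  have hmd : ∀ m : ℕ, m + k - j = m + (k - j) := fun m => by omega
  have hk1 : ∀ m : ℕ, k + 1 - m = (k - j) + (j + 1) - m := fun m => by omega
  simp only [hmd, hk1]
  exact key n (k - j) (j + 1)
end

section
/- The number of Callan permutations of [n+k] equals ∑_{m=0}^{min(n,k)} (m!)² S(n+1,m+1) S(k+1,m+1), where a Callan permutation of [n+k] is a permutation in which every maximal substring whose entries all lie in {1,...,n} or all lie in {n+1,...,n+k} is increasing. -/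
/-- A permutation `π` of `[n+k]` is a Callan permutation if every maximal substring of
consecutive entries all lying in `N = {1,…,n}` or all lying in `K = {n+1,…,n+k}` is
increasing; equivalently, whenever two consecutive entries lie on the same side, they
increase. Here `Fin (n + k)` encodes `[n+k]`, with `x.1 < n` meaning `x ∈ N`. -/
def IsCallan (n k : ℕ) (π : Equiv.Perm (Fin (n + k))) : Prop :=
  ∀ i : Fin (n + k - 1),
    (((π ⟨i.1, by have := i.isLt; omega⟩).1 < n) ↔
      ((π ⟨i.1 + 1, by have := i.isLt; omega⟩).1 < n)) →
    π ⟨i.1, by have := i.isLt; omega⟩ < π ⟨i.1 + 1, by have := i.isLt; omega⟩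

open Nat

namespace Callan

lemma stirling_succ_succ (n r : ℕ) :
    stirling (n + 1) (r + 1) = (r + 1) * stirling n (r + 1) + stirling n r := rfl

lemma stirling_succ_one (n : ℕ) : stirling (n + 1) 1 = 1 := by
  induction n with
  | zero => rfl
  | succ n ih => rw [stirling, ih]; rfl

def CoversNonzero {n m : ℕ} (f : Fin n → Fin (m + 1)) : Prop :=
  ∀ j, j ≠ 0 → ∃ x, f x = j

section CoversNonzero

variable {n m : ℕ}

lemma CoversNonzero.le {f : Fin n → Fin (m + 1)} (hf : CoversNonzero f) : m ≤ n := by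
  classical
  have hsub : Finset.univ.erase 0 ⊆ Finset.univ.image f := fun j hj => by
    obtain ⟨x, rfl⟩ := hf j (Finset.ne_of_mem_erase hj)
    exact Finset.mem_image_of_mem f (Finset.mem_univ x)
  simpa using (Finset.card_le_card hsub).trans Finset.card_image_le

lemma coversNonzero_cons {g : Fin n → Fin (m + 1)} (hg : CoversNonzero g) (v : Fin (m + 1)) :
    CoversNonzero (Fin.cons v g : Fin (n + 1) → Fin (m + 1)) := fun j hj => by
  obtain ⟨x, rfl⟩ := hg j hj
  exact ⟨x.succ, rfl⟩

lemma coversNonzero_cons_succAbove {h : Fin n → Fin (m + 1)} (hh : CoversNonzero h)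
    (v : Fin (m + 1)) :
    CoversNonzero (Fin.cons v.succ (v.succ.succAbove ∘ h) : Fin (n + 1) → Fin (m + 2)) := by
  intro j hj
  rcases eq_or_ne j v.succ with rfl | hjv
  · exact ⟨0, rfl⟩
  obtain ⟨i, rfl⟩ := Fin.exists_succAbove_eq hjv
  have hi : i ≠ 0 := by
    rintro rfl
    exact hj (Fin.succAbove_ne_zero_zero (Fin.succ_ne_zero v))
  obtain ⟨x, rfl⟩ := hh i hi
  exact ⟨x.succ, rfl⟩

-- A covering function on `Fin (n + 1)` either still covers after dropping the point `0`, or `0` is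
-- the only preimage of its value `v.succ`, and the rest, which misses `v.succ`, is relabelled by
-- `v.succ.succAbove`.
def consCovering (n m : ℕ) :
    ({g : Fin n → Fin (m + 2) // CoversNonzero g} × Fin (m + 2)) ⊕
      ({h : Fin n → Fin (m + 1) // CoversNonzero h} × Fin (m + 1)) →
      {f : Fin (n + 1) → Fin (m + 2) // CoversNonzero f}
  | .inl (g, v) => ⟨Fin.cons v g, coversNonzero_cons g.2 v⟩
  | .inr (h, v) => ⟨Fin.cons v.succ (v.succ.succAbove ∘ h), coversNonzero_cons_succAbove h.2 v⟩

lemma consCovering_bijective (n m : ℕ) : Function.Bijective (consCovering n m) := by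
  refine ⟨?_, ?_⟩
  · rintro (⟨g, v⟩ | ⟨h, v⟩) (⟨g', v'⟩ | ⟨h', v'⟩) heq <;>
      have heq := congrArg Subtype.val heq <;> simp only [consCovering] at heq
    · obtain ⟨rfl, hg⟩ := Fin.cons_injective2 heq
      rw [Subtype.ext hg]
    · obtain ⟨x, hx⟩ := g.2 v'.succ (Fin.succ_ne_zero v')
      exact absurd (hx.symm.trans (congrFun (Fin.cons_injective2 heq).2 x))
        (Fin.succAbove_ne _ _).symm
    · obtain ⟨x, hx⟩ := g'.2 v.succ (Fin.succ_ne_zero v)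
      exact absurd (hx.symm.trans (congrFun (Fin.cons_injective2 heq).2 x).symm)
        (Fin.succAbove_ne _ _).symm
    · obtain ⟨hv, hh⟩ := Fin.cons_injective2 heq
      obtain rfl := Fin.succ_injective _ hv
      rw [Subtype.ext ((Fin.succAbove_right_injective).comp_left hh)]
  · rintro ⟨f, hf⟩
    by_cases htail : CoversNonzero (Fin.tail f)
    · exact ⟨.inl (⟨_, htail⟩, f 0), Subtype.ext (Fin.cons_self_tail f)⟩
    simp only [CoversNonzero, not_forall, not_exists] at htail
    obtain ⟨j, hj, hmiss⟩ := htail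
    have hf0 : f 0 = j := by
      obtain ⟨x, hx⟩ := hf j hj
      cases x using Fin.cases with
      | zero => exact hx
      | succ x => exact absurd hx (hmiss x)
    choose h hh using fun x => Fin.exists_succAbove_eq (hmiss x)
    have hcov : CoversNonzero h := by
      intro i hi
      have hj0 : j.succAbove 0 = 0 := Fin.succAbove_ne_zero_zero hj
      obtain ⟨x, hx⟩ := hf (j.succAbove i)
        fun h0 => hi (Fin.succAbove_right_injective (h0.trans hj0.symm))
      cases x using Fin.cases with
      | zero => exact absurd (hf0.symm.trans hx) (Fin.succAbove_ne _ _).symm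
      | succ x => exact ⟨x, Fin.succAbove_right_injective ((hh x).trans hx)⟩
    obtain ⟨v, rfl⟩ := Fin.exists_succ_eq.mpr hj
    refine ⟨.inr (⟨h, hcov⟩, v), Subtype.ext ?_⟩
    simp only [consCovering]
    ext x : 1
    cases x using Fin.cases with
    | zero => exact hf0.symm
    | succ x => exact hh x

lemma card_coversNonzero_fin_one (n : ℕ) :
    Nat.card {f : Fin n → Fin 1 // CoversNonzero f} = 1 := by
  rw [Nat.card_eq_one_iff_unique]
  exact ⟨inferInstance, ⟨⟨fun _ => 0, fun j hj => absurd (Fin.fin_one_eq_zero j) hj⟩⟩⟩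

lemma card_coversNonzero_fin_zero (m : ℕ) :
    Nat.card {f : Fin 0 → Fin (m + 2) // CoversNonzero f} = 0 := by
  rw [Nat.card_eq_zero]
  exact .inl ⟨fun ⟨f, hf⟩ => (hf 1 one_ne_zero).elim fun x _ => x.elim0⟩

lemma card_coversNonzero_succ (n m : ℕ) :
    Nat.card {f : Fin (n + 1) → Fin (m + 2) // CoversNonzero f} =
      Nat.card {g : Fin n → Fin (m + 2) // CoversNonzero g} * (m + 2) +
        Nat.card {h : Fin n → Fin (m + 1) // CoversNonzero h} * (m + 1) := by
  rw [← Nat.card_eq_of_bijective _ (consCovering_bijective n m)]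
  simp [Nat.card_sum, Nat.card_prod]

theorem card_coversNonzero (n m : ℕ) :
    Nat.card {f : Fin n → Fin (m + 1) // CoversNonzero f} = m ! * stirling (n + 1) (m + 1) := by
  induction n generalizing m with
  | zero =>
    cases m with
    | zero => rw [card_coversNonzero_fin_one]; rfl
    | succ m => rw [card_coversNonzero_fin_zero]; simp [stirling]
  | succ n ih =>
    cases m with
    | zero => rw [card_coversNonzero_fin_one, stirling_succ_one]; rfl
    | succ m =>
      rw [card_coversNonzero_succ, ih, ih, stirling_succ_succ (n + 1) (m + 1), Nat.factorial_succ]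
      ring

end CoversNonzero

-- The slot of position `i` in the run pattern of the word `b` (`true` for `N`).
def runIndex (b : ℕ → Bool) : ℕ → ℕ
  | 0 => if b 0 then 0 else 1
  | i + 1 => runIndex b i + if b (i + 1) = b i then 0 else 1

section runIndex

variable (b : ℕ → Bool)

lemma runIndex_zero_le_one : runIndex b 0 ≤ 1 := by
  unfold runIndex; split <;> simp

lemma runIndex_succ_le (i : ℕ) : runIndex b (i + 1) ≤ runIndex b i + 1 := by
  simp only [runIndex]; split <;> simp

lemma runIndex_mono : Monotone (runIndex b) :=
  monotone_nat_of_le_succ fun _ => Nat.le_add_right _ _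

lemma even_runIndex_iff (i : ℕ) : Even (runIndex b i) ↔ b i = true := by
  induction i with
  | zero => unfold runIndex; split <;> simp_all
  | succ i ih =>
    simp only [runIndex]
    split_ifs with h
    · simp_all
    · rw [Nat.even_add_one, ih]
      revert h
      cases b i <;> cases b (i + 1) <;> simp

lemma exists_runIndex_eq {i j : ℕ} (hj : 1 ≤ j) (hji : j ≤ runIndex b i) :
    ∃ p ≤ i, runIndex b p = j := by
  induction i with
  | zero => exact ⟨0, le_rfl, by have := runIndex_zero_le_one b; omega⟩
  | succ i ih =>
    by_cases h : j ≤ runIndex b i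
    · obtain ⟨p, hp, hpj⟩ := ih h
      exact ⟨p, by omega, hpj⟩
    · have := runIndex_succ_le b i
      have := runIndex_mono b i.le_succ
      exact ⟨i + 1, le_rfl, by omega⟩

end runIndex

lemma eq_of_even_iff_of_le_add_one {a b c : ℕ} (ha : c ≤ a) (ha' : a ≤ c + 1) (hb : c ≤ b)
    (hb' : b ≤ c + 1) (h : Even a ↔ Even b) : a = b := by
  rw [Nat.even_iff, Nat.even_iff] at h
  omega

-- Slots as in the pattern `A₀ B₁ A₁ ⋯ B_m A_m B₀`; only the slots `0` and `2m + 1` of `A₀`, `B₀`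
-- may be unused.
structure IsSlotting (n k m : ℕ) (s : Fin (n + k) → ℕ) : Prop where
  even_iff : ∀ z, Even (s z) ↔ z.1 < n
  le : ∀ z, s z ≤ 2 * m + 1
  exists_eq : ∀ j, 1 ≤ j → j ≤ 2 * m → ∃ z, s z = j

def sides (n k : ℕ) (π : Equiv.Perm (Fin (n + k))) (i : ℕ) : Bool :=
  if h : i < n + k then decide ((π ⟨i, h⟩).1 < n) else false

section Slotting

variable {n k m m' : ℕ} {s s' : Fin (n + k) → ℕ} {π : Equiv.Perm (Fin (n + k))}

lemma sides_of_lt {i : ℕ} (h : i < n + k) : sides n k π i = decide ((π ⟨i, h⟩).1 < n) := dif_pos h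

lemma IsSlotting.le_of_isSlotting (hs : IsSlotting n k m s) (hs' : IsSlotting n k m' s) :
    m' ≤ m := by
  by_contra h
  obtain ⟨z, hz⟩ := hs'.exists_eq (2 * m') (by omega) le_rfl
  have := hs.le z
  omega

lemma IsSlotting.unique (hs : IsSlotting n k m s) (hs' : IsSlotting n k m' s) : m = m' :=
  le_antisymm (hs'.le_of_isSlotting hs) (hs.le_of_isSlotting hs')

lemma IsSlotting.exists_lt_of_lt (hs : IsSlotting n k m s) (hmono : Monotone (s ∘ π))
    {p : Fin (n + k)} {j : ℕ} (hj : 1 ≤ j) (hjp : j < s (π p)) : ∃ q < p, s (π q) = j := by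
  obtain ⟨z, rfl⟩ := hs.exists_eq j hj (by have := hs.le (π p); omega)
  exact ⟨π.symm z, hmono.reflect_lt (by simpa using hjp), by simp⟩

-- Read along `π`, the slots start at `0` or `1` and never skip a value (a skipped slot would be
-- occupied by an entry placed in between), and their parity is the side: they are the run indices.
lemma IsSlotting.apply_eq_runIndex (hs : IsSlotting n k m s) (hmono : Monotone (s ∘ π))
    (p : Fin (n + k)) : s (π p) = runIndex (sides n k π) p := by
  obtain ⟨i, hi⟩ := p
  have hpar : ∀ (i) (hi : i < n + k), Even (s (π ⟨i, hi⟩)) ↔ Even (runIndex (sides n k π) i) := by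
    intro i hi
    rw [hs.even_iff, even_runIndex_iff, sides_of_lt hi, decide_eq_true_iff]
  induction i with
  | zero =>
    have hle : s (π ⟨0, hi⟩) ≤ 1 := by
      by_contra h
      obtain ⟨q, hq, -⟩ := hs.exists_lt_of_lt hmono le_rfl (not_le.mp h)
      exact Nat.not_lt_zero _ hq
    exact eq_of_even_iff_of_le_add_one (Nat.zero_le _) hle (Nat.zero_le _)
      (runIndex_zero_le_one _) (hpar 0 hi)
  | succ i ih =>
    have ih := ih (by omega)
    have hmono' : s (π ⟨i, by omega⟩) ≤ s (π ⟨i + 1, hi⟩) := hmono (Fin.mk_le_mk.mpr i.le_succ)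
    have hgap : s (π ⟨i + 1, hi⟩) ≤ s (π ⟨i, by omega⟩) + 1 := by
      by_contra h
      obtain ⟨q, hq, hqs⟩ := hs.exists_lt_of_lt hmono (Nat.le_add_left 1 _) (not_le.mp h)
      have := hmono (show q ≤ ⟨i, by omega⟩ from Fin.mk_le_mk.mpr (Nat.lt_succ_iff.mp hq))
      simp only [Function.comp_apply] at this
      omega
    exact eq_of_even_iff_of_le_add_one (ih ▸ hmono') (ih ▸ hgap)
      (runIndex_mono _ i.le_succ) (runIndex_succ_le _ i) (hpar (i + 1) hi)

lemma IsSlotting.eq_of_sort_eq (hs : IsSlotting n k m s) (hs' : IsSlotting n k m' s')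
    (h : Tuple.sort s = Tuple.sort s') : s = s' := by
  funext z
  obtain ⟨p, rfl⟩ := (Tuple.sort s).surjective z
  rw [hs.apply_eq_runIndex (Tuple.monotone_sort s), h,
    hs'.apply_eq_runIndex (Tuple.monotone_sort s')]

lemma isCallan_iff :
    IsCallan n k π ↔ ∀ i (h : i + 1 < n + k),
      ((π ⟨i, by omega⟩).1 < n ↔ (π ⟨i + 1, h⟩).1 < n) → π ⟨i, by omega⟩ < π ⟨i + 1, h⟩ :=
  ⟨fun hπ i h => hπ ⟨i, by omega⟩, fun hπ i => hπ i.1 (by omega)⟩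

lemma runIndex_sides_succ {i : ℕ} (h : i + 1 < n + k) :
    runIndex (sides n k π) (i + 1) = runIndex (sides n k π) i +
      if ((π ⟨i, by omega⟩).1 < n ↔ (π ⟨i + 1, h⟩).1 < n) then 0 else 1 := by
  simp only [runIndex, sides_of_lt h, sides_of_lt (show i < n + k by omega), decide_eq_decide,
    Iff.comm]

lemma IsSlotting.isCallan_sort (hs : IsSlotting n k m s) : IsCallan n k (Tuple.sort s) := by
  obtain ⟨hmono, htie⟩ := Tuple.eq_sort_iff.mp (rfl : Tuple.sort s = Tuple.sort s)
  refine isCallan_iff.mpr fun i h hside => htie _ _ (Fin.mk_lt_mk.mpr i.lt_succ_self) ?_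
  rw [hs.apply_eq_runIndex hmono, hs.apply_eq_runIndex hmono, runIndex_sides_succ h, if_pos hside]
  rfl

def runSlots (n k : ℕ) (π : Equiv.Perm (Fin (n + k))) (z : Fin (n + k)) : ℕ :=
  runIndex (sides n k π) (π.symm z)

lemma isSlotting_runSlots :
    IsSlotting n k (runIndex (sides n k π) (n + k - 1) / 2) (runSlots n k π) where
  even_iff z := by
    rw [runSlots, even_runIndex_iff, sides_of_lt (π.symm z).2]
    simp
  le z := by
    have := runIndex_mono (sides n k π) (show (π.symm z).1 ≤ n + k - 1 by omega)
    rw [runSlots]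
    omega
  exists_eq j hj hjm := by
    obtain ⟨p, hp, hpj⟩ := exists_runIndex_eq (sides n k π) hj (i := n + k - 1) (by omega)
    have hp' : p < n + k := by
      rcases Nat.eq_zero_or_pos (n + k) with h0 | h0
      · have := runIndex_zero_le_one (sides n k π)
        simp only [h0, zero_tsub] at hjm
        omega
      · omega
    exact ⟨π ⟨p, hp'⟩, by simp [runSlots, hpj]⟩

lemma strictMono_fin_of_lt_add_one {α : Type*} [Preorder α] {T : ℕ} {f : Fin T → α}
    (h : ∀ i (hi : i + 1 < T), f ⟨i, by omega⟩ < f ⟨i + 1, hi⟩) : StrictMono f := by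
  cases T with
  | zero => exact fun a => a.elim0
  | succ T => exact Fin.strictMono_iff_lt_succ.mpr fun i => h i.1 (by omega)

lemma sort_runSlots (hπ : IsCallan n k π) : Tuple.sort (runSlots n k π) = π := by
  have hkey : StrictMono fun p : Fin (n + k) => toLex (runIndex (sides n k π) p, π p) := by
    refine strictMono_fin_of_lt_add_one fun i h => Prod.Lex.toLex_lt_toLex.mpr ?_
    rw [runIndex_sides_succ h]
    by_cases hside : (π ⟨i, by omega⟩).1 < n ↔ (π ⟨i + 1, h⟩).1 < n
    · exact .inr ⟨by rw [if_pos hside]; rfl, isCallan_iff.mp hπ i h hside⟩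
    · exact .inl (by rw [if_neg hside]; exact Nat.lt_succ_self _)
  refine (Tuple.eq_sort_iff.mpr ⟨fun p q hpq => ?_, fun p q hpq heq => ?_⟩).symm
  · simpa [runSlots] using runIndex_mono _ hpq
  · simp only [runSlots, Equiv.symm_apply_apply] at heq
    exact ((Prod.Lex.toLex_lt_toLex.mp (hkey hpq)).resolve_left heq.not_lt).2

end Slotting

section Blocks

variable {n k m : ℕ} {s : Fin (n + k) → ℕ}

def IsSlotting.leftBlock (hs : IsSlotting n k m s) (x : Fin n) : Fin (m + 1) :=
  ⟨s (Fin.castAdd k x) / 2, by have := hs.le (Fin.castAdd k x); omega⟩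

-- `K`-runs are numbered from the right, so that the possibly empty `B₀` gets `0`.
def IsSlotting.rightBlock (hs : IsSlotting n k m s) (y : Fin k) : Fin (m + 1) :=
  Fin.rev ⟨s (Fin.natAdd n y) / 2, by have := hs.le (Fin.natAdd n y); omega⟩

lemma IsSlotting.coversNonzero_leftBlock (hs : IsSlotting n k m s) :
    CoversNonzero hs.leftBlock := by
  intro j hj
  have hj : 1 ≤ j.1 := Nat.one_le_iff_ne_zero.mpr (Fin.val_ne_zero_iff.mpr hj)
  obtain ⟨z, hz⟩ := hs.exists_eq (2 * j) (by omega) (by omega)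
  have hzN := (hs.even_iff z).mp (hz ▸ even_two_mul _)
  induction z using Fin.addCases with
  | left x => exact ⟨x, Fin.ext (by simp [leftBlock, hz])⟩
  | right y => simp at hzN

lemma IsSlotting.coversNonzero_rightBlock (hs : IsSlotting n k m s) :
    CoversNonzero hs.rightBlock := by
  intro j hj
  have hj : 1 ≤ j.1 := Nat.one_le_iff_ne_zero.mpr (Fin.val_ne_zero_iff.mpr hj)
  have hjm := j.2
  obtain ⟨z, hz⟩ := hs.exists_eq (2 * (m - j) + 1) (by omega) (by omega)
  have hzK : ¬ z.1 < n := fun h => Nat.not_even_two_mul_add_one _ (hz ▸ (hs.even_iff z).mpr h)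
  induction z using Fin.addCases with
  | left x => simp at hzK
  | right y => exact ⟨y, Fin.ext (by simp only [rightBlock, Fin.val_rev, hz]; omega)⟩

lemma IsSlotting.le_min (hs : IsSlotting n k m s) : m ≤ min n k :=
  _root_.le_min hs.coversNonzero_leftBlock.le hs.coversNonzero_rightBlock.le

lemma isSlotting_append {f : Fin n → Fin (m + 1)} {g : Fin k → Fin (m + 1)}
    (hf : CoversNonzero f) (hg : CoversNonzero g) :
    IsSlotting n k m (Fin.append (fun x => 2 * (f x).1) (fun y => 2 * (m - g y) + 1)) where
  even_iff z := by
    induction z using Fin.addCases with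
    | left x => simp
    | right y => simp
  le z := by
    induction z using Fin.addCases with
    | left x => simp only [Fin.append_left]; omega
    | right y => simp only [Fin.append_right]; omega
  exists_eq j hj hjm := by
    obtain ⟨i, rfl | rfl⟩ := Nat.even_or_odd' j
    · obtain ⟨x, hx⟩ := hf ⟨i, by omega⟩ (Fin.ne_of_val_ne (by simp only [Fin.val_zero]; omega))
      exact ⟨Fin.castAdd k x, by simp [hx]⟩
    · obtain ⟨y, hy⟩ := hg ⟨m - i, by omega⟩ (Fin.ne_of_val_ne (by simp only [Fin.val_zero]; omega))
      exact ⟨Fin.natAdd n y, by simp only [Fin.append_right, hy]; omega⟩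

def slottingEquiv (n k m : ℕ) :
    {s // IsSlotting n k m s} ≃
      {f : Fin n → Fin (m + 1) // CoversNonzero f} ×
        {g : Fin k → Fin (m + 1) // CoversNonzero g} where
  toFun s := (⟨_, s.2.coversNonzero_leftBlock⟩, ⟨_, s.2.coversNonzero_rightBlock⟩)
  invFun p := ⟨_, isSlotting_append p.1.2 p.2.2⟩
  left_inv := by
    rintro ⟨s, hs⟩
    refine Subtype.ext (funext fun z => ?_)
    have hpar := hs.even_iff z
    have hle := hs.le z
    rw [Nat.even_iff] at hpar
    induction z using Fin.addCases with
    | left x =>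
      simp only [Fin.append_left, IsSlotting.leftBlock, Fin.val_castAdd, Fin.is_lt, iff_true]
        at hpar ⊢
      omega
    | right y =>
      simp only [Fin.append_right, IsSlotting.rightBlock, Fin.val_rev, Fin.val_natAdd] at hpar ⊢
      omega
  right_inv := by
    rintro ⟨⟨f, hf⟩, ⟨g, hg⟩⟩
    ext x
    · simp [IsSlotting.leftBlock]
    · simp only [IsSlotting.rightBlock, Fin.append_right, Fin.val_rev]
      omega

instance (n k m : ℕ) : Finite {s // IsSlotting n k m s} :=
  .of_equiv _ (slottingEquiv n k m).symm

end Blocks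

def sortSlotting (n k : ℕ) (p : Σ m : Fin (min n k + 1), {s // IsSlotting n k m s}) :
    {π : Equiv.Perm (Fin (n + k)) // IsCallan n k π} :=
  ⟨Tuple.sort p.2.1, p.2.2.isCallan_sort⟩

lemma sortSlotting_bijective (n k : ℕ) : Function.Bijective (sortSlotting n k) := by
  refine ⟨?_, ?_⟩
  · rintro ⟨m, s, hs⟩ ⟨m', s', hs'⟩ h
    obtain rfl := hs.eq_of_sort_eq hs' (congrArg Subtype.val h)
    obtain rfl := Fin.ext (hs.unique hs')
    rfl
  · rintro ⟨π, hπ⟩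
    have hs := isSlotting_runSlots (π := π)
    exact ⟨⟨⟨_, Nat.lt_succ_of_le hs.le_min⟩, _, hs⟩, Subtype.ext (sort_runSlots hπ)⟩

end Callan

theorem card_callan_permutations_general (n k : ℕ) :
    Nat.card {π : Equiv.Perm (Fin (n + k)) // IsCallan n k π} =
      ∑ m ∈ Finset.range (min n k + 1),
        (Nat.factorial m) ^ 2 * stirling (n + 1) (m + 1) * stirling (k + 1) (m + 1) := by
  rw [← Nat.card_eq_of_bijective _ (Callan.sortSlotting_bijective n k), Nat.card_sigma,
    ← Fin.sum_univ_eq_sum_range]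
  refine Finset.sum_congr rfl fun m _ => ?_
  rw [Nat.card_congr (Callan.slottingEquiv n k m), Nat.card_prod, Callan.card_coversNonzero,
    Callan.card_coversNonzero]
  ring

theorem card_callan_permutations (n k : ℕ) (hn : 0 < n) (hk : 0 < k) :
    Nat.card {π : Equiv.Perm (Fin (n + k)) // IsCallan n k π} =
      ∑ m ∈ Finset.range (min n k + 1),
        (Nat.factorial m) ^ 2 * stirling (n + 1) (m + 1) * stirling (k + 1) (m + 1) :=
  card_callan_permutations_general n k
end

section
/- For all integers k ≥ 1 and j with 1 ≤ j ≤ k, the number of surjections from an n-element set onto a j-element ordered codomain that additionally respects a fixed refinement structure satisfies: ∑_{m=0}^{k+2-j} C(k+2-j,m)(m+j-1)! S(n,m+j-1) = ∑_{m=0}^{j-1} (-1)^m C(j-1,m)(k+1-m)^n. -/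
open Finset

lemma choose_id (a m : ℕ) : m * a.choose m + a.choose (m+1) * (m+1) = a * a.choose m := by
  rcases le_or_gt m a with h | h
  · rw [Nat.choose_succ_right_eq, mul_comm m, ← Nat.mul_add, Nat.add_sub_cancel' h, mul_comm]
  · rw [Nat.choose_eq_zero_of_lt h, Nat.choose_eq_zero_of_lt (by omega)]
    simp

lemma sum_choose_stirling (a n : ℕ) :
    (∑ m ∈ range (a+1), a.choose m * m.factorial * stirling n m) = a ^ n := by
  induction n with
  | zero =>
    rw [Finset.sum_range_succ']
    simp [stirling]
  | succ n ih =>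
    rw [Finset.sum_range_succ']
    have h1 : ∀ m, a.choose (m+1) * (m+1).factorial * stirling (n+1) (m+1)
        = (m+1) * (a.choose (m+1) * (m+1).factorial * stirling n (m+1))
          + a.choose (m+1) * (m+1).factorial * stirling n m := by
      intro m
      simp only [stirling]
      ring
    simp only [h1]
    rw [Finset.sum_add_distrib]
    have h2 : (∑ m ∈ range a, (m+1) * (a.choose (m+1) * (m+1).factorial * stirling n (m+1)))
        = ∑ m ∈ range (a+1), m * (a.choose m * m.factorial * stirling n m) := by
      rw [Finset.sum_range_succ']
      simp
    have h3 : (∑ m ∈ range a, a.choose (m+1) * (m+1).factorial * stirling n m)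
        = ∑ m ∈ range (a+1), a.choose (m+1) * (m+1).factorial * stirling n m := by
      rw [Finset.sum_range_succ, Nat.choose_succ_self]
      simp
    rw [h2, h3]
    have h4 : ∀ m, m * (a.choose m * m.factorial * stirling n m)
        + a.choose (m+1) * (m+1).factorial * stirling n m
        = a * (a.choose m * m.factorial * stirling n m) := by
      intro m
      have h := choose_id a m
      calc m * (a.choose m * m.factorial * stirling n m)
          + a.choose (m+1) * (m+1).factorial * stirling n m
          = (m * a.choose m + a.choose (m+1) * (m+1)) * (m.factorial * stirling n m) := by
            rw [Nat.factorial_succ]; ring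
        _ = a * (a.choose m * m.factorial * stirling n m) := by rw [h]; ring
    rw [← Finset.sum_add_distrib]
    simp only [h4, stirling]
    rw [← Finset.mul_sum, ih]
    ring

lemma main_identity (b : ℕ) : ∀ a n : ℕ,
    (∑ m ∈ range (a+1), (a.choose m : ℤ) * (m+b).factorial * stirling n (m+b))
      = ∑ m ∈ range (b+1), (-1:ℤ)^m * b.choose m * ((a + b - m : ℕ) : ℤ)^n := by
  induction b with
  | zero =>
    intro a n
    have h := sum_choose_stirling a n
    have h' : ((∑ m ∈ range (a+1), a.choose m * m.factorial * stirling n m : ℕ) : ℤ)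
        = ((a:ℤ))^n := by exact_mod_cast h
    push_cast at h'
    simpa using h'
  | succ b ih =>
    intro a n
    -- Pascal recurrence for the LHS: F a (b+1) = F (a+1) b - F a b
    have hF : (∑ m ∈ range (a+1+1), ((a+1).choose m : ℤ) * (m+b).factorial * stirling n (m+b))
        = (∑ m ∈ range (a+1), (a.choose m : ℤ) * (m+b).factorial * stirling n (m+b))
          + ∑ m ∈ range (a+1), (a.choose m : ℤ) * (m+(b+1)).factorial * stirling n (m+(b+1)) := by
      rw [Finset.sum_range_succ']
      have e1 : ∀ m : ℕ, ((a+1).choose (m+1) : ℤ) * (m+1+b).factorial * stirling n (m+1+b)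
          = (a.choose m : ℤ) * (m+(b+1)).factorial * stirling n (m+(b+1))
            + (a.choose (m+1) : ℤ) * (m+1+b).factorial * stirling n (m+1+b) := by
        intro m
        have : m + 1 + b = m + (b+1) := by omega
        rw [this, Nat.choose_succ_succ]
        push_cast
        ring
      simp only [e1]
      rw [Finset.sum_add_distrib]
      have e2 : (∑ m ∈ range (a+1), (a.choose m : ℤ) * (m+b).factorial * stirling n (m+b))
          = (∑ m ∈ range a, (a.choose (m+1) : ℤ) * (m+1+b).factorial * stirling n (m+1+b))
            + (a.choose 0 : ℤ) * (0+b).factorial * stirling n (0+b) := by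
        rw [Finset.sum_range_succ']
      have e3 : (∑ m ∈ range (a+1), (a.choose (m+1) : ℤ) * (m+1+b).factorial * stirling n (m+1+b))
          = ∑ m ∈ range a, (a.choose (m+1) : ℤ) * (m+1+b).factorial * stirling n (m+1+b) := by
        rw [Finset.sum_range_succ, Nat.choose_succ_self]
        simp
      rw [e3, e2]
      simp [Nat.choose_succ_self]
      ring
    -- Pascal recurrence for the RHS: G a (b+1) = G (a+1) b - G a b
    have hG : (∑ m ∈ range (b+1+1), (-1:ℤ)^m * (b+1).choose m * ((a + (b+1) - m : ℕ) : ℤ)^n)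
        = (∑ m ∈ range (b+1), (-1:ℤ)^m * b.choose m * (((a+1) + b - m : ℕ) : ℤ)^n)
          - ∑ m ∈ range (b+1), (-1:ℤ)^m * b.choose m * ((a + b - m : ℕ) : ℤ)^n := by
      rw [Finset.sum_range_succ']
      have e1 : ∀ m : ℕ, (-1:ℤ)^(m+1) * ((b+1).choose (m+1)) * ((a + (b+1) - (m+1) : ℕ) : ℤ)^n
          = -((-1:ℤ)^m * (b.choose m) * ((a + b - m : ℕ) : ℤ)^n)
            - (-1:ℤ)^m * (b.choose (m+1)) * ((a + b - m : ℕ) : ℤ)^n := by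
        intro m
        have : a + (b+1) - (m+1) = a + b - m := by omega
        rw [this, Nat.choose_succ_succ]
        push_cast
        ring
      simp only [e1]
      have e2 : (∑ m ∈ range (b+1), (-1:ℤ)^m * b.choose m * (((a+1) + b - m : ℕ) : ℤ)^n)
          = (∑ m ∈ range b, -((-1:ℤ)^m * (b.choose (m+1)) * ((a + b - m : ℕ) : ℤ)^n))
            + ((a + (b+1) - 0 : ℕ) : ℤ)^n := by
        rw [Finset.sum_range_succ']
        have e21 : ∀ m : ℕ, (-1:ℤ)^(m+1) * (b.choose (m+1)) * (((a+1) + b - (m+1) : ℕ) : ℤ)^n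
            = -((-1:ℤ)^m * (b.choose (m+1)) * ((a + b - m : ℕ) : ℤ)^n) := by
          intro m
          have : (a+1) + b - (m+1) = a + b - m := by omega
          rw [this]
          ring
        simp only [e21]
        have : (a+1) + b - 0 = a + (b+1) - 0 := by omega
        rw [this]
        simp
      have e3 : (∑ m ∈ range (b+1), -((-1:ℤ)^m * (b.choose (m+1)) * ((a + b - m : ℕ) : ℤ)^n))
          = ∑ m ∈ range b, -((-1:ℤ)^m * (b.choose (m+1)) * ((a + b - m : ℕ) : ℤ)^n) := by
        rw [Finset.sum_range_succ, Nat.choose_succ_self]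
        simp
      rw [e2, ← e3, Finset.sum_sub_distrib, Finset.sum_neg_distrib, Finset.sum_neg_distrib]
      simp only [pow_zero, Nat.choose_zero_right, Nat.cast_one, one_mul]
      ring
    rw [hG, ← ih (a+1) n, ← ih a n]
    have := hF
    linarith [hF]

theorem refined_surjection_count_eq_incl_excl (n k j : ℕ) (hn : 0 < n) (hk : 1 ≤ k)
    (hj : 1 ≤ j) (hjk : j ≤ k) :
    (∑ m ∈ Finset.range (k + 2 - j + 1),
        (Nat.choose (k + 2 - j) m * Nat.factorial (m + j - 1) * stirling n (m + j - 1) : ℤ)) =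
      ∑ m ∈ Finset.range (j - 1 + 1),
        (-1 : ℤ) ^ m * Nat.choose (j - 1) m * ((k + 1 - m : ℕ) : ℤ) ^ n := by
  obtain ⟨b, rfl⟩ : ∃ b, j = b + 1 := ⟨j - 1, by omega⟩
  have ha : k + 2 - (b + 1) = k + 1 - b := by omega
  have h1 : ∀ m : ℕ, m + (b + 1) - 1 = m + b := fun m => by omega
  simp only [ha, h1, Nat.add_sub_cancel]
  rw [main_identity b (k + 1 - b) n]
  apply Finset.sum_congr rfl
  intro m hm
  have : k + 1 - b + b - m = k + 1 - m := by omega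
  rw [this]
end
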